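/- arXiv:2502.04136 — 3 statements merged into one kernel-verified Lean document; each statement's English description precedes it below -/
import Mathlib

section
/- For all r ≥ 2 and m ≥ 1, |Cyc_r(rm)| = (rm-1)_{r-1} · (rm-r+1) · |Cyc_r(rm-r)|, where (x)_m denotes the falling factorial. -/
/-!
Fix a point `z`. A permutation `σ` in `Cyc_r` is cut open at `z`: the arc `z, σ z, …, σ^(r-1) z`
is an injective choice of `r - 1` further points ((n-1)_{r-1} ways), and `σ^r z` is either `z`
again (the cycle of `z` had length `r`) or one of the `n - r` points off the arc, where the rest
of the cycle of `z` is reattached: `n - r + 1` choices. Removing the arc leaves a permutation `τ`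
of the `n - r` points off the arc, and the cycle of `z` has length `r` plus the length of the
`τ`-cycle of `σ^r z`; hence `σ ∈ Cyc_r` iff `τ ∈ Cyc_r`, and `(arc, σ^r z, τ) ↦ σ` is a bijection.
-/

open Equiv Function

namespace Function

variable {α β : Type*} {f : α → α} {x : α}

theorem minimalPeriod_eq_of_forall_lt {n : ℕ} (hn : 0 < n) (hx : IsPeriodicPt f n x)
    (hlt : ∀ m, 0 < m → m < n → f^[m] x ≠ x) : minimalPeriod f x = n :=
  (hx.minimalPeriod_le hn).antisymm <| not_lt.1 fun h =>
    hlt _ (hx.minimalPeriod_pos hn) h (isPeriodicPt_minimalPeriod f x)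

theorem minimalPeriod_eq_of_map_orbit {g : β → β} {π : β → α} (hπ : Injective π) {y : β}
    (h : ∀ n, f (π (g^[n] y)) = π (g (g^[n] y))) :
    minimalPeriod f (π y) = minimalPeriod g y := by
  have hiter : ∀ n, f^[n] (π y) = π (g^[n] y) := by
    intro n
    induction n with
    | zero => rfl
    | succ n ih => rw [iterate_succ_apply', ih, h, ← iterate_succ_apply' g]
  refine minimalPeriod_eq_minimalPeriod_iff.2 fun n => ?_
  simp only [IsPeriodicPt, IsFixedPt, hiter, hπ.eq_iff]

end Function

namespace Equiv.Perm

variable {α : Type*}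

theorem SameCycle.minimalPeriod_eq [Finite α] {σ : Perm α} {x y : α} (h : σ.SameCycle x y) :
    minimalPeriod σ x = minimalPeriod σ y := by
  obtain ⟨i, rfl⟩ := h.exists_nat_pow_eq
  rw [← iterate_eq_pow, minimalPeriod_apply_iterate (σ.injective.mem_periodicPts x)]

theorem exists_eq_mul_ofSubtype {p : α → Prop} [DecidablePred p] {f σ : Perm α}
    (h : ∀ x, ¬p x → f x = σ x) : ∃ τ : Perm (Subtype p), σ = f * ofSubtype τ := by
  have hfix : ∀ x, ¬p x → (f⁻¹ * σ) x = x := fun x hx => by simp [← h x hx]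
  have hp : ∀ x, p ((f⁻¹ * σ) x) ↔ p x := fun x => by
    by_cases hx : p x
    · refine iff_of_true (by_contra fun hgx => hgx ?_) hx
      rwa [(f⁻¹ * σ).injective (hfix _ hgx)]
    · rw [hfix x hx]
  refine ⟨(f⁻¹ * σ).subtypePerm hp, ?_⟩
  rw [ofSubtype_subtypePerm hp fun x hx => not_not.1 (mt (hfix x) hx), mul_inv_cancel_left]

end Equiv.Perm

/-- The paper's `Cyc_r` on an arbitrary type: `minimalPeriod σ x` is the length of the cycle of `σ`
through `x` (`1` at a fixed point). -/
abbrev Cyc (r : ℕ) (α : Type*) : Type _ := {σ : Perm α // ∀ x, r ∣ minimalPeriod σ x}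

theorem Cyc.card_congr {α β : Type*} (r : ℕ) (e : α ≃ β) :
    Nat.card (Cyc r α) = Nat.card (Cyc r β) :=
  Nat.card_congr <| (permCongr e).subtypeEquiv fun σ => by
    have h : ∀ x, minimalPeriod (permCongr e σ) (e x) = minimalPeriod σ x := fun x =>
      minimalPeriod_eq_of_map_orbit e.injective fun n => by simp
    simp only [← e.forall_congr_right (q := fun y => r ∣ minimalPeriod (permCongr e σ) y), h]

namespace Cyc

variable {α : Type*} {k : ℕ} (z : α) (e : Fin k ↪ {x // x ≠ z})

def arcPt : Fin (k + 1) → α := Fin.cons z fun i => (e i : α)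

def arc : List α := List.ofFn (arcPt z e)

@[simp] theorem arcPt_zero : arcPt z e 0 = z := rfl

@[simp] theorem arcPt_succ (i : Fin k) : arcPt z e i.succ = e i := rfl

theorem arcPt_injective : Injective (arcPt z e) :=
  Fin.cons_injective_iff.2 ⟨fun ⟨i, hi⟩ => (e i).2 hi, Subtype.val_injective.comp e.injective⟩

theorem mem_arc {x : α} : x ∈ arc z e ↔ ∃ i, arcPt z e i = x := List.mem_ofFn

theorem arcPt_mem_arc (i : Fin (k + 1)) : arcPt z e i ∈ arc z e := (mem_arc z e).2 ⟨i, rfl⟩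

theorem nodup_arc : (arc z e).Nodup := List.nodup_ofFn.2 (arcPt_injective z e)

@[simp] theorem length_arc : (arc z e).length = k + 1 := List.length_ofFn

variable (b : Option {x // x ∉ arc z e}) (τ : Perm {x // x ∉ arc z e})

def spliceCycle : List α := arc z e ++ (b.map Subtype.val).toList

theorem nodup_spliceCycle : (spliceCycle z e b).Nodup := by
  cases b with
  | none => simpa [spliceCycle] using nodup_arc z e
  | some b₀ =>
    simp only [spliceCycle, Option.map_some, Option.toList_some, List.nodup_append, nodup_arc,
      List.nodup_singleton, List.mem_singleton, true_and]
    exact fun a ha b hb hab => b₀.2 (by rwa [← hb, ← hab])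

theorem getElem_spliceCycle (i : Fin (k + 1)) :
    (spliceCycle z e b)[i.1]'(by simp [spliceCycle]; omega) = arcPt z e i := by
  simp only [spliceCycle]
  rw [List.getElem_append_left (by simp; omega)]
  simp only [arc, List.getElem_ofFn]

def exitPoint : α := b.elim z Subtype.val

theorem exitPoint_injective : Injective (exitPoint z e) := by
  have hz : z ∈ arc z e := arcPt_mem_arc z e 0
  rintro (_ | b₁) (_ | b₂) h
  · rfl
  · exact absurd ((show z = b₂ from h) ▸ hz) b₂.2
  · exact absurd ((show z = b₁ from h.symm) ▸ hz) b₁.2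
  · exact congrArg some (Subtype.ext h)

def orbitArc (σ : Perm α) (hσ : k + 1 ≤ minimalPeriod σ z) : Fin k ↪ {x // x ≠ z} where
  toFun i := ⟨σ^[i + 1] z, fun h =>
    Nat.succ_ne_zero _ ((iterate_eq_iterate_iff_of_lt_minimalPeriod (by omega) (by omega)).1 h)⟩
  inj' i j h := Fin.ext <| Nat.succ_injective <|
    (iterate_eq_iterate_iff_of_lt_minimalPeriod (by omega) (by omega)).1 (congrArg Subtype.val h)

theorem arcPt_orbitArc (σ : Perm α) (hσ : k + 1 ≤ minimalPeriod σ z) (i : Fin (k + 1)) :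
    arcPt z (orbitArc z σ hσ) i = σ^[i] z := by
  cases i using Fin.cases with
  | zero => rfl
  | succ i => rfl

theorem exists_exitPoint_eq_iterate (σ : Perm α) (hσ : k + 1 ≤ minimalPeriod σ z) :
    ∃ b, exitPoint z (orbitArc z σ hσ) b = σ^[k + 1] z := by
  by_cases h : σ^[k + 1] z = z
  · exact ⟨none, h.symm⟩
  refine ⟨some ⟨σ^[k + 1] z, fun hmem => ?_⟩, rfl⟩
  obtain ⟨i, hi⟩ := (mem_arc _ _).1 hmem
  have hlt : k + 1 < minimalPeriod σ z :=
    hσ.lt_of_ne fun heq => h (heq ▸ iterate_minimalPeriod)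
  rw [arcPt_orbitArc] at hi
  have := (iterate_eq_iterate_iff_of_lt_minimalPeriod (by omega) hlt).1 hi
  omega

variable [DecidableEq α]

/-- `splice z e b τ` runs along the arc `arcPt z e` to `exitPoint z e b` (back to `z` when
`b = none`); off the arc it follows `τ`, except that the `τ`-preimage of the exit point is sent
to `z`. -/
def splice : Perm α := (spliceCycle z e b).formPerm * Perm.ofSubtype τ

theorem splice_apply_arcPt_castSucc (i : Fin k) :
    splice z e b τ (arcPt z e i.castSucc) = arcPt z e i.succ := by
  rw [splice, Perm.mul_apply, Perm.ofSubtype_apply_of_not_mem τ (not_not.2 (arcPt_mem_arc z e _)),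
    ← getElem_spliceCycle, ← getElem_spliceCycle,
    List.formPerm_apply_lt_getElem _ (nodup_spliceCycle z e b) _ (by simp [spliceCycle]; omega)]
  rfl

theorem splice_apply_arcPt_last :
    splice z e b τ (arcPt z e (Fin.last k)) = exitPoint z e b := by
  rw [splice, Perm.mul_apply, Perm.ofSubtype_apply_of_not_mem τ (not_not.2 (arcPt_mem_arc z e _)),
    ← getElem_spliceCycle, List.formPerm_apply_getElem _ (nodup_spliceCycle z e b)]
  cases b with
  | none => simpa [spliceCycle, exitPoint] using getElem_spliceCycle z e none 0
  | some b₀ => simp [spliceCycle, exitPoint]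

theorem splice_apply_coe (y : {x // x ∉ arc z e}) :
    splice z e b τ y = if b = some (τ y) then z else τ y := by
  rw [splice, Perm.mul_apply, Perm.ofSubtype_apply_coe]
  split_ifs with h
  · simp [h, spliceCycle, arc, List.ofFn_succ]
  · refine List.formPerm_apply_of_notMem ?_
    cases b <;> simp_all [spliceCycle, eq_comm, Subtype.ext_iff, (τ y).2]

theorem iterate_splice_arcPt (i : Fin (k + 1)) : (splice z e b τ)^[i] z = arcPt z e i := by
  induction i using Fin.induction with
  | zero => rfl
  | succ i ih =>
    rw [Fin.val_castSucc] at ih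
    rw [Fin.val_succ, iterate_succ_apply', ih, splice_apply_arcPt_castSucc]

theorem iterate_splice_succ : (splice z e b τ)^[k + 1] z = exitPoint z e b := by
  have h := iterate_splice_arcPt z e b τ (Fin.last k)
  rw [Fin.val_last] at h
  rw [iterate_succ_apply', h, splice_apply_arcPt_last]

theorem iterate_splice_ne_self {m : ℕ} (hm : 0 < m) (hmk : m < k + 1) :
    (splice z e b τ)^[m] z ≠ z := by
  rw [iterate_splice_arcPt z e b τ ⟨m, hmk⟩]
  exact (arcPt_injective z e).ne (a₂ := 0) (Fin.ne_of_val_ne hm.ne')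

theorem iterate_splice_add {b₀ : {x // x ∉ arc z e}} {j : ℕ} (hj : j < minimalPeriod τ b₀) :
    (splice z e (some b₀) τ)^[k + 1 + j] z = (τ^[j] b₀ : α) := by
  induction j with
  | zero => exact iterate_splice_succ z e (some b₀) τ
  | succ j ih =>
    rw [← add_assoc, iterate_succ_apply', ih (by omega), splice_apply_coe, if_neg,
      ← iterate_succ_apply' τ]
    intro h
    refine not_isPeriodicPt_of_pos_of_lt_minimalPeriod j.succ_ne_zero hj ?_
    rw [IsPeriodicPt, IsFixedPt, iterate_succ_apply', ← Option.some_injective _ h]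

theorem sameCycle_splice_arcPt (i : Fin (k + 1)) : (splice z e b τ).SameCycle z (arcPt z e i) :=
  ⟨i, by rw [zpow_natCast, ← Perm.iterate_eq_pow, iterate_splice_arcPt]⟩

theorem minimalPeriod_splice_of_not_sameCycle {y : {x // x ∉ arc z e}}
    (hy : ∀ b₀ ∈ b, ¬τ.SameCycle b₀ y) :
    minimalPeriod (splice z e b τ) y = minimalPeriod τ y := by
  refine minimalPeriod_eq_of_map_orbit Subtype.val_injective fun n => ?_
  have hb : b ≠ some (τ (τ^[n] y)) := fun h => hy _ h <| by
    rw [← iterate_succ_apply' τ, Perm.iterate_eq_pow]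
    exact Perm.sameCycle_pow_left.2 (Perm.SameCycle.refl _ _)
  rw [splice_apply_coe, if_neg hb]

theorem exists_splice_eq (σ : Perm α) (hσ : k + 1 ≤ minimalPeriod σ z) :
    ∃ (e : Fin k ↪ {x // x ≠ z}) (b : Option {x // x ∉ arc z e}) (τ : Perm {x // x ∉ arc z e}),
      splice z e b τ = σ := by
  set e := orbitArc z σ hσ
  obtain ⟨b, hb⟩ := exists_exitPoint_eq_iterate z σ hσ
  have hagree : ∀ x, ¬x ∉ arc z e → splice z e b 1 x = σ x := by
    intro x hx
    obtain ⟨i, rfl⟩ := (mem_arc z e).1 (not_not.1 hx)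
    have : splice z e b 1 (arcPt z e i) = σ^[i + 1] z := by
      cases i using Fin.lastCases with
      | last => rw [splice_apply_arcPt_last, hb, Fin.val_last]
      | cast i => rw [splice_apply_arcPt_castSucc, arcPt_orbitArc, Fin.val_succ, Fin.val_castSucc]
    rw [this, arcPt_orbitArc, iterate_succ_apply']
  obtain ⟨τ, hτ⟩ := Perm.exists_eq_mul_ofSubtype hagree
  refine ⟨e, b, τ, ?_⟩
  rw [hτ, splice, splice, map_one, mul_one]

variable [Finite α]

theorem minimalPeriod_splice :
    minimalPeriod (splice z e b τ) z = k + 1 + b.elim 0 (minimalPeriod τ) := by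
  cases b with
  | none =>
    exact minimalPeriod_eq_of_forall_lt k.succ_pos (iterate_splice_succ z e none τ)
      fun m hm hmk => iterate_splice_ne_self z e none τ hm hmk
  | some b₀ =>
    show _ = k + 1 + minimalPeriod τ b₀
    have hL := minimalPeriod_pos_of_mem_periodicPts (τ.injective.mem_periodicPts b₀)
    refine minimalPeriod_eq_of_forall_lt (by omega) ?_ fun m hm hmL => ?_
    · rw [IsPeriodicPt, IsFixedPt, show k + 1 + minimalPeriod τ b₀ =
        k + 1 + (minimalPeriod τ b₀ - 1) + 1 by omega, iterate_succ_apply',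
        iterate_splice_add z e τ (by omega), splice_apply_coe, if_pos]
      rw [← iterate_succ_apply' τ, Nat.succ_eq_add_one, Nat.sub_add_cancel hL,
        iterate_minimalPeriod]
    · obtain hmk | hmk := lt_or_ge m (k + 1)
      · exact iterate_splice_ne_self z e _ τ hm hmk
      · obtain ⟨j, rfl⟩ := Nat.exists_eq_add_of_le hmk
        rw [iterate_splice_add z e τ (by omega)]
        exact fun h => (τ^[j] b₀).2 (by rw [h]; exact arcPt_mem_arc z e 0)

theorem sameCycle_splice_of_sameCycle {b₀ y : {x // x ∉ arc z e}} (h : τ.SameCycle b₀ y) :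
    (splice z e (some b₀) τ).SameCycle z y := by
  obtain ⟨j, rfl⟩ := h.exists_nat_pow_eq
  have hL := minimalPeriod_pos_of_mem_periodicPts (τ.injective.mem_periodicPts b₀)
  refine ⟨((k + 1 + j % minimalPeriod τ b₀ : ℕ) : ℤ), ?_⟩
  rw [zpow_natCast, ← Perm.iterate_eq_pow, iterate_splice_add z e τ (Nat.mod_lt _ hL),
    iterate_mod_minimalPeriod_eq, Perm.iterate_eq_pow]

theorem splice_periods_dvd_iff :
    (∀ x, k + 1 ∣ minimalPeriod (splice z e b τ) x) ↔ ∀ y, k + 1 ∣ minimalPeriod τ y := by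
  have hz : k + 1 ∣ minimalPeriod (splice z e b τ) z ↔ ∀ b₀ ∈ b, k + 1 ∣ minimalPeriod τ b₀ := by
    rw [minimalPeriod_splice]
    cases b <;> simp
  constructor
  · intro h y
    by_cases hy : ∃ b₀ ∈ b, τ.SameCycle b₀ y
    · obtain ⟨b₀, hb, hy⟩ := hy
      rw [← hy.minimalPeriod_eq]
      exact hz.1 (h z) b₀ hb
    · push Not at hy
      rw [← minimalPeriod_splice_of_not_sameCycle z e b τ hy]
      exact h y
  · intro h x
    by_cases hx : x ∈ arc z e
    · obtain ⟨i, rfl⟩ := (mem_arc z e).1 hx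
      rw [← (sameCycle_splice_arcPt z e b τ i).minimalPeriod_eq]
      exact hz.2 fun b₀ _ => h b₀
    · lift x to {x // x ∉ arc z e} using hx
      by_cases hy : ∃ b₀ ∈ b, τ.SameCycle b₀ x
      · obtain ⟨b₀, rfl, hy⟩ := hy
        rw [← (sameCycle_splice_of_sameCycle z e τ hy).minimalPeriod_eq]
        exact hz.2 fun b₀ _ => h b₀
      · push Not at hy
        rw [minimalPeriod_splice_of_not_sameCycle z e b τ hy]
        exact h x

variable (k) in
def SpliceData : Type _ :=
  Σ e : Fin k ↪ {x // x ≠ z}, Option {x // x ∉ arc z e} × Cyc (k + 1) {x // x ∉ arc z e}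

def spliceMap (d : SpliceData k z) : Cyc (k + 1) α :=
  ⟨splice z d.1 d.2.1 d.2.2, (splice_periods_dvd_iff z d.1 d.2.1 d.2.2).2 d.2.2.2⟩

theorem spliceMap_injective : Injective (spliceMap (k := k) z) := by
  rintro ⟨e₁, b₁, τ₁, hτ₁⟩ ⟨e₂, b₂, τ₂, hτ₂⟩ h
  simp only [spliceMap, Subtype.mk.injEq] at h
  obtain rfl : e₁ = e₂ := by
    ext i
    have hi := iterate_splice_arcPt z e₁ b₁ τ₁ i.succ
    rw [h, iterate_splice_arcPt] at hi
    simpa using hi.symm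
  obtain rfl : b₁ = b₂ := exitPoint_injective z e₁ <| by
    rw [← iterate_splice_succ z e₁ b₁ τ₁, ← iterate_splice_succ z e₁ b₂ τ₂, h]
  obtain rfl : τ₁ = τ₂ := Perm.ofSubtype_injective (mul_left_cancel h)
  rfl

theorem spliceMap_surjective : Surjective (spliceMap (k := k) z) := by
  rintro ⟨σ, hσ⟩
  have hper : k + 1 ≤ minimalPeriod σ z :=
    Nat.le_of_dvd (minimalPeriod_pos_of_mem_periodicPts (σ.injective.mem_periodicPts z)) (hσ z)
  obtain ⟨e, b, τ, rfl⟩ := exists_splice_eq z σ hper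
  exact ⟨⟨e, b, τ, (splice_periods_dvd_iff z e b τ).1 hσ⟩, rfl⟩

end Cyc

open Cyc in
theorem Cyc.card_succ {α : Type*} [Fintype α] [DecidableEq α] (k : ℕ) (z : α) :
    Nat.card (Cyc (k + 1) α) = (Fintype.card α - 1).descFactorial k *
      ((Fintype.card α - (k + 1) + 1) *
        Nat.card (Cyc (k + 1) (Fin (Fintype.card α - (k + 1))))) := by
  have hcompl (e : Fin k ↪ {x // x ≠ z}) :
      Nat.card {x // x ∉ arc z e} = Fintype.card α - (k + 1) := by
    rw [Nat.card_eq_fintype_card, Fintype.card_subtype_compl,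
      Fintype.card_of_subtype (arc z e).toFinset (by simp),
      List.toFinset_card_of_nodup (nodup_arc z e), length_arc]
  rw [← Nat.card_eq_of_bijective _ ⟨spliceMap_injective z, spliceMap_surjective z⟩, SpliceData,
    Nat.card_sigma]
  have hfiber (e : Fin k ↪ {x // x ≠ z}) :
      Nat.card (Option {x // x ∉ arc z e} × Cyc (k + 1) {x // x ∉ arc z e}) =
        (Fintype.card α - (k + 1) + 1) *
          Nat.card (Cyc (k + 1) (Fin (Fintype.card α - (k + 1)))) := by
    rw [Nat.card_prod, Finite.card_option, Cyc.card_congr (k + 1) (Finite.equivFin _), hcompl]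
  rw [Finset.sum_congr rfl fun e _ => hfiber e, Finset.sum_const, Finset.card_univ,
    Fintype.card_embedding_eq, smul_eq_mul]
  simp [Fintype.card_subtype_compl]

/-- `|Cyc_r(rm)| = (rm-1)_{r-1} · (rm-r+1) · |Cyc_r(rm-r)|`. -/
theorem stmt13 (r m : ℕ) (hr : 2 ≤ r) (hm : 1 ≤ m) :
    Nat.card {σ : Equiv.Perm (Fin (r * m)) //
        ∀ x, r ∣ Function.minimalPeriod ⇑σ x} =
      Nat.descFactorial (r * m - 1) (r - 1) * (r * m - r + 1) *
        Nat.card {σ : Equiv.Perm (Fin (r * m - r)) //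
          ∀ x, r ∣ Function.minimalPeriod ⇑σ x} := by
  obtain ⟨k, rfl⟩ : ∃ k, r = k + 1 := ⟨r - 1, by omega⟩
  have hpos : 0 < (k + 1) * m := Nat.mul_pos k.succ_pos hm
  rw [Cyc.card_succ k (⟨0, hpos⟩ : Fin ((k + 1) * m)), Fintype.card_fin, Nat.add_sub_cancel,
    mul_assoc]
end

section
/- For all m ≥ 4, 2·|Cyc_4(4m)| < |Reg_2(4m)|: twice the number of permutations of {1,...,4m} with all cycle lengths divisible by 4 is strictly less than the number of permutations of {1,...,4m} with all cycle lengths odd. -/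
open Equiv Equiv.Perm Function Finset

set_option linter.unusedSectionVars false

namespace Stmt14

variable {α : Type*} [Fintype α] [DecidableEq α]

lemma mem_pp (σ : Perm α) (x : α) : x ∈ periodicPts ⇑σ := by
  refine ⟨orderOf σ, orderOf_pos σ, ?_⟩
  show (⇑σ)^[orderOf σ] x = x
  simp [← Equiv.Perm.coe_pow, pow_orderOf_eq_one]

lemma mp_pos (σ : Perm α) (x : α) : 0 < minimalPeriod ⇑σ x :=
  minimalPeriod_pos_of_mem_periodicPts (mem_pp σ x)

lemma mp_dvd_iff {σ : Perm α} {x : α} {n : ℕ} :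
    minimalPeriod ⇑σ x ∣ n ↔ (⇑σ)^[n] x = x :=
  isPeriodicPt_iff_minimalPeriod_dvd.symm

lemma mp_iterate (σ : Perm α) (x : α) (k : ℕ) :
    minimalPeriod ⇑σ ((⇑σ)^[k] x) = minimalPeriod ⇑σ x :=
  minimalPeriod_apply_iterate (mem_pp σ x) k

/-- our own "same orbit" relation with ℕ exponents -/
def R (σ : Perm α) (x y : α) : Prop := ∃ n : ℕ, (⇑σ)^[n] x = y

lemma R.refl (σ : Perm α) (x : α) : R σ x x := ⟨0, rfl⟩

lemma R.symm {σ : Perm α} {x y : α} (h : R σ x y) : R σ y x := by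
  obtain ⟨n, rfl⟩ := h
  set m := minimalPeriod ⇑σ x with hm
  refine ⟨m * (n + 1) - n, ?_⟩
  have hle : n ≤ m * (n + 1) := by
    have : 1 ≤ m := mp_pos σ x
    nlinarith [this]
  rw [← Function.iterate_add_apply, Nat.sub_add_cancel hle]
  exact (isPeriodicPt_minimalPeriod ⇑σ x).mul_const _

lemma R.mp_eq {σ : Perm α} {x y : α} (h : R σ x y) :
    minimalPeriod ⇑σ x = minimalPeriod ⇑σ y := by
  obtain ⟨n, rfl⟩ := h
  exact (mp_iterate σ x n).symm

lemma R_fixed {σ : Perm α} {b x : α} (hb : σ b = b) (h : R σ b x) : x = b := by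
  obtain ⟨n, rfl⟩ := h
  exact Function.IsFixedPt.iterate hb n

lemma orbit_ne_fixed {σ : Perm α} {a : α} (ha : σ a = a) {x : α} (hx : x ≠ a) (k : ℕ) :
    (⇑σ)^[k] x ≠ a := by
  intro h
  have hfa : (⇑σ)^[k] a = a := Function.IsFixedPt.iterate ha k
  exact hx (σ.injective.iterate k (h.trans hfa.symm))

lemma insert_lemma (σ : Perm α) (a t : α) (ha : σ a = a) (hta : t ≠ a) :
    minimalPeriod ⇑(swap a t * σ) a = minimalPeriod ⇑σ t + 1 ∧
    (∀ x, R σ t x → minimalPeriod ⇑(swap a t * σ) x = minimalPeriod ⇑σ x + 1) ∧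
    (∀ x, x ≠ a → ¬ R σ t x → minimalPeriod ⇑(swap a t * σ) x = minimalPeriod ⇑σ x) ∧
    (∀ x, R (swap a t * σ) a x ↔ (x = a ∨ R σ t x)) := by
  set τ := swap a t * σ with hτdef
  set ℓ := minimalPeriod ⇑σ t with hℓ
  have hℓpos : 0 < ℓ := mp_pos σ t
  have hτ_apply : ∀ x, τ x = swap a t (σ x) := fun x => rfl
  have s2 : τ a = t := by rw [hτ_apply, ha, swap_apply_left]
  have s3 : ∀ j, j + 1 ≤ ℓ → (⇑τ)^[j + 1] a = (⇑σ)^[j] t := by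
    intro j
    induction j with
    | zero => intro _; simpa using s2
    | succ j ih =>
      intro hj
      have ihv := ih (by omega)
      rw [Function.iterate_succ_apply', ihv, hτ_apply,
        ← Function.iterate_succ_apply' (⇑σ) j t]
      have h1 : (⇑σ)^[j + 1] t ≠ a := orbit_ne_fixed ha hta _
      have h2 : (⇑σ)^[j + 1] t ≠ t := by
        intro h
        exact not_isPeriodicPt_of_pos_of_lt_minimalPeriod (x := t) (n := j + 1)
          (by omega) (by omega) h
      exact swap_apply_of_ne_of_ne h1 h2
  obtain ⟨L, hL⟩ : ∃ L, ℓ = L + 1 := ⟨ℓ - 1, by omega⟩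
  have s4 : (⇑τ)^[ℓ + 1] a = a := by
    have : (⇑τ)^[ℓ] a = (⇑σ)^[L] t := by rw [hL]; exact s3 L (by omega)
    have h5 : (⇑σ)^[L + 1] t = t := by
      rw [show L + 1 = ℓ from hL.symm]; exact iterate_minimalPeriod
    rw [Function.iterate_succ_apply', this, hτ_apply,
      ← Function.iterate_succ_apply' (⇑σ) L t, h5, swap_apply_right]
  have hne : ∀ m, 0 < m → m ≤ ℓ → (⇑τ)^[m] a ≠ a := by
    intro m hm hmle
    obtain ⟨j, rfl⟩ : ∃ j, m = j + 1 := ⟨m - 1, by omega⟩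
    rw [s3 j hmle]
    exact orbit_ne_fixed ha hta j
  have F1 : minimalPeriod ⇑τ a = ℓ + 1 := by
    have hper : IsPeriodicPt ⇑τ (ℓ + 1) a := s4
    have hle := hper.minimalPeriod_le (by omega)
    rcases Nat.lt_or_ge (minimalPeriod ⇑τ a) (ℓ + 1) with h | h
    · exact absurd (iterate_minimalPeriod (f := ⇑τ) (x := a))
        (hne _ (mp_pos τ a) (by omega))
    · omega
  have F2' : ∀ j, minimalPeriod ⇑τ ((⇑σ)^[j] t) = ℓ + 1 := by
    intro j
    have h1 : (⇑σ)^[j % ℓ] t = (⇑σ)^[j] t := iterate_mod_minimalPeriod_eq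
    have hr : j % ℓ + 1 ≤ ℓ := Nat.mod_lt _ hℓpos
    rw [← h1, ← s3 _ hr, mp_iterate τ a (j % ℓ + 1), F1]
  refine ⟨F1, ?_, ?_, ?_⟩
  · intro x hx
    obtain ⟨j, rfl⟩ := hx
    rw [F2' j, mp_iterate σ t j]
  · intro x hxa hR
    have havoid_t : ∀ k, (⇑σ)^[k] x ≠ t := fun k h => hR (R.symm ⟨k, h⟩)
    have havoid_a : ∀ k, (⇑σ)^[k] x ≠ a := orbit_ne_fixed ha hxa
    have same : ∀ k, (⇑τ)^[k] x = (⇑σ)^[k] x := by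
      intro k
      induction k with
      | zero => rfl
      | succ k ih =>
        rw [Function.iterate_succ_apply', ih, hτ_apply,
          ← Function.iterate_succ_apply' (⇑σ) k x]
        exact swap_apply_of_ne_of_ne (havoid_a (k + 1)) (havoid_t (k + 1))
    refine Nat.dvd_antisymm ?_ ?_
    · rw [mp_dvd_iff, same]; exact iterate_minimalPeriod
    · rw [mp_dvd_iff, ← same]; exact iterate_minimalPeriod
  · intro x
    constructor
    · rintro ⟨k, rfl⟩
      have hmod : (⇑τ)^[k % (ℓ + 1)] a = (⇑τ)^[k] a := by
        rw [← F1]; exact iterate_mod_minimalPeriod_eq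
      rcases Nat.eq_zero_or_pos (k % (ℓ + 1)) with h0 | hpos
      · left; rw [← hmod, h0]; rfl
      · right
        have hlt : k % (ℓ + 1) ≤ ℓ := by have := Nat.mod_lt k (show 0 < ℓ + 1 by omega); omega
        obtain ⟨j, hj⟩ : ∃ j, k % (ℓ + 1) = j + 1 := ⟨k % (ℓ + 1) - 1, by omega⟩
        exact ⟨j, by rw [← hmod, hj, s3 j (by omega)]⟩
    · rintro (rfl | ⟨j, rfl⟩)
      · exact R.refl _ _
      · have h1 : (⇑σ)^[j % ℓ] t = (⇑σ)^[j] t := iterate_mod_minimalPeriod_eq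
        exact ⟨j % ℓ + 1, by rw [s3 _ (Nat.mod_lt _ hℓpos), h1]⟩

variable {β : Type*} [Fintype β] [DecidableEq β]


lemma mp_dvd_iff' {σ : Perm α} {x : α} {n : ℕ} :
    Function.minimalPeriod ⇑σ x ∣ n ↔ (⇑σ)^[n] x = x :=
  Function.isPeriodicPt_iff_minimalPeriod_dvd.symm

lemma conj_iterate (e : α ≃ β) (σ : Perm α) (k : ℕ) (y : β) :
    (⇑(e.permCongr σ))^[k] y = e ((⇑σ)^[k] (e.symm y)) := by
  induction k with
  | zero => simp
  | succ k ih => rw [Function.iterate_succ_apply', ih, Function.iterate_succ_apply']; simp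

lemma mp_conj (e : α ≃ β) (σ : Perm α) (y : β) :
    Function.minimalPeriod ⇑(e.permCongr σ) y = Function.minimalPeriod ⇑σ (e.symm y) := by
  refine Nat.dvd_antisymm ?_ ?_
  · rw [mp_dvd_iff', conj_iterate, Function.iterate_minimalPeriod]; simp
  · rw [mp_dvd_iff']
    have h := Function.iterate_minimalPeriod
      (f := ⇑(e.permCongr σ)) (x := y)
    rw [conj_iterate] at h
    have := congrArg e.symm h
    simpa using this

/-- the count of permutations of `Fin n` all whose cycle lengths satisfy `p` -/
noncomputable def cnt (p : ℕ → Prop) (n : ℕ) : ℕ :=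
  Nat.card {σ : Perm (Fin n) // ∀ x, p (Function.minimalPeriod ⇑σ x)}

lemma cnt_eq (p : ℕ → Prop) (n : ℕ) (h : Fintype.card α = n) :
    Nat.card {σ : Perm α // ∀ x, p (Function.minimalPeriod ⇑σ x)} = cnt p n := by
  have e : α ≃ Fin n := Fintype.equivFinOfCardEq h
  refine Nat.card_congr ((e.permCongr).subtypeEquiv fun σ => ?_)
  constructor
  · intro hσ y; rw [mp_conj]; exact hσ _
  · intro hσ x
    have := hσ (e x)
    rwa [mp_conj, Equiv.symm_apply_apply] at this

lemma ofSubtype_iterate {q : α → Prop} [DecidablePred q] (σ : Perm (Subtype q))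
    (k : ℕ) (y : Subtype q) : (⇑(ofSubtype σ))^[k] ↑y = ((⇑σ)^[k] y : α) := by
  induction k with
  | zero => rfl
  | succ k ih =>
    rw [Function.iterate_succ_apply', Function.iterate_succ_apply', ih, ofSubtype_apply_coe]

lemma mp_ofSubtype {q : α → Prop} [DecidablePred q] (σ : Perm (Subtype q)) (y : Subtype q) :
    Function.minimalPeriod ⇑(ofSubtype σ) ↑y = Function.minimalPeriod ⇑σ y := by
  refine Nat.dvd_antisymm ?_ ?_
  · rw [mp_dvd_iff', ofSubtype_iterate, Function.iterate_minimalPeriod]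
  · rw [mp_dvd_iff']
    have h := Function.iterate_minimalPeriod (f := ⇑(ofSubtype σ)) (x := (y : α))
    rw [ofSubtype_iterate] at h
    exact Subtype.ext h

/-- reduction: permutations fixing everything outside `q`, with cycle condition inside `q`,
are counted by `cnt p (card q)`. -/
lemma card_fix_outside (p : ℕ → Prop) (q : α → Prop) [DecidablePred q] :
    Nat.card {σ : Perm α // (∀ x, ¬ q x → σ x = x) ∧
        ∀ x, q x → p (Function.minimalPeriod ⇑σ x)} =
      cnt p (Fintype.card (Subtype q)) := by
  rw [← cnt_eq p _ rfl]
  refine Nat.card_congr (Equiv.symm ?_)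
  refine ((Perm.subtypeEquivSubtypePerm q).subtypeEquiv fun σ => ?_).trans
    (Equiv.subtypeSubtypeEquivSubtypeInter _ _)
  have key : ∀ (x : α) (hx : q x),
      Function.minimalPeriod ⇑((Perm.subtypeEquivSubtypePerm q) σ : Perm α) x
        = Function.minimalPeriod ⇑σ ⟨x, hx⟩ := fun x hx => mp_ofSubtype σ ⟨x, hx⟩
  constructor
  · intro hσ x hx
    rw [key x hx]; exact hσ ⟨x, hx⟩
  · intro hσ y
    have := hσ y y.2
    rwa [key y y.2, Subtype.coe_eta] at this



lemma surgery2 (a b t : α) (hba : b ≠ a) (hta : t ≠ a) (htb : t ≠ b) (σ₀ τ : Perm α)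
    (hτ : τ = swap a b * (swap b t * σ₀)) :
    ((∀ x, ¬(x ≠ a ∧ x ≠ b) → σ₀ x = x) ∧
      (∀ x, (x ≠ a ∧ x ≠ b) → Odd (minimalPeriod ⇑σ₀ x)))
    ↔ ((∀ x, Odd (minimalPeriod ⇑τ x)) ∧ τ a = b ∧ τ b = t) := by
  set τ₁ := swap b t * σ₀ with hτ₁
  -- common facts under the assumption that σ₀ fixes a and b
  have main : ∀ (ha : σ₀ a = a) (hb : σ₀ b = b),
      τ a = b ∧ τ b = t ∧
      (minimalPeriod ⇑τ a = minimalPeriod ⇑σ₀ t + 2) ∧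
      (minimalPeriod ⇑τ b = minimalPeriod ⇑σ₀ t + 2) ∧
      (∀ x, x ≠ a → x ≠ b → R σ₀ t x →
        minimalPeriod ⇑τ x = minimalPeriod ⇑σ₀ x + 2) ∧
      (∀ x, x ≠ a → x ≠ b → ¬ R σ₀ t x →
        minimalPeriod ⇑τ x = minimalPeriod ⇑σ₀ x) := by
    intro ha hb
    obtain ⟨I1, I2, I3, I4⟩ := insert_lemma σ₀ b t hb htb
    have hτ₁a : τ₁ a = a := by
      show swap b t (σ₀ a) = a
      rw [ha]; exact swap_apply_of_ne_of_ne (Ne.symm hba) (Ne.symm hta)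
    have hτ₁b : τ₁ b = t := by
      show swap b t (σ₀ b) = t
      rw [hb]; exact swap_apply_left b t
    obtain ⟨J1, J2, J3, J4⟩ := insert_lemma τ₁ a b hτ₁a hba
    rw [← hτ] at J1 J2 J3 J4
    have hτa : τ a = b := by
      rw [hτ]
      show swap a b (τ₁ a) = b
      rw [hτ₁a]; exact swap_apply_left a b
    have hτb : τ b = t := by
      rw [hτ]
      show swap a b (τ₁ b) = t
      rw [hτ₁b]; exact swap_apply_of_ne_of_ne hta htb
    refine ⟨hτa, hτb, ?_, ?_, ?_, ?_⟩
    · rw [J1, I1]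
    · have : R τ₁ b b := R.refl _ _
      rw [J2 b this, I1]
    · intro x hxa hxb hR
      rw [J2 x (I4 x |>.mpr (Or.inr hR)), I2 x hR]
    · intro x hxa hxb hR
      rw [J3 x hxa (fun h => (I4 x |>.mp h).elim hxb hR), I3 x hxb hR]
  constructor
  · rintro ⟨hfix, hodd⟩
    have ha : σ₀ a = a := hfix a (by simp)
    have hb : σ₀ b = b := hfix b (by simp)
    obtain ⟨hτa, hτb, h1, h2, h3, h4⟩ := main ha hb
    refine ⟨?_, hτa, hτb⟩
    intro x
    have hodd2 : ∀ k : ℕ, Odd (k + 2) ↔ Odd k := fun k => by simp [Nat.odd_add]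
    by_cases hxa : x = a
    · subst hxa; rw [h1, hodd2]
      exact hodd t ⟨hta, htb⟩
    by_cases hxb : x = b
    · subst hxb; rw [h2, hodd2]
      exact hodd t ⟨hta, htb⟩
    by_cases hR : R σ₀ t x
    · rw [h3 x hxa hxb hR, hodd2]
      exact hodd x ⟨hxa, hxb⟩
    · rw [h4 x hxa hxb hR]
      exact hodd x ⟨hxa, hxb⟩
  · rintro ⟨hP, hτa, hτb⟩
    have hgab : τ a = swap a b (swap b t (σ₀ a)) := by rw [hτ]; rfl
    have hgbb : τ b = swap a b (swap b t (σ₀ b)) := by rw [hτ]; rfl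
    have ha : σ₀ a = a := by
      have h1 : swap b t (σ₀ a) = a := by
        apply (swap a b).injective
        rw [← hgab, hτa, swap_apply_left]
      have := congrArg (swap b t) h1
      rwa [swap_apply_self, swap_apply_of_ne_of_ne (Ne.symm hba) (Ne.symm hta)] at this
    have hb : σ₀ b = b := by
      have h1 : swap b t (σ₀ b) = t := by
        apply (swap a b).injective
        rw [← hgbb, hτb, swap_apply_of_ne_of_ne hta htb]
      have := congrArg (swap b t) h1
      rwa [swap_apply_self, swap_apply_right] at this
    obtain ⟨hτa', hτb', h1, h2, h3, h4⟩ := main ha hb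
    have hodd2 : ∀ k : ℕ, Odd (k + 2) ↔ Odd k := fun k => by simp [Nat.odd_add]
    refine ⟨?_, ?_⟩
    · intro x hx
      by_cases hxa : x = a
      · rw [hxa, ha]
      · have hxb : x = b := by tauto
        rw [hxb, hb]
    · intro x ⟨hxa, hxb⟩
      by_cases hR : R σ₀ t x
      · have := hP x
        rw [h3 x hxa hxb hR, hodd2] at this
        exact this
      · have := hP x; rwa [h4 x hxa hxb hR] at this

lemma surgery3 (a b c d : α) (hba : b ≠ a) (hca : c ≠ a) (hcb : c ≠ b)
    (hda : d ≠ a) (hdb : d ≠ b) (hdc : d ≠ c) (σ₀ τ : Perm α)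
    (hτ : τ = swap a b * (swap b c * (swap c d * σ₀))) :
    ((∀ x, ¬(x ≠ a ∧ x ≠ b ∧ x ≠ c ∧ x ≠ d) → σ₀ x = x) ∧
      (∀ x, (x ≠ a ∧ x ≠ b ∧ x ≠ c ∧ x ≠ d) → 4 ∣ minimalPeriod ⇑σ₀ x))
    ↔ ((∀ x, 4 ∣ minimalPeriod ⇑τ x) ∧ τ a = b ∧ τ b = c ∧ τ c = d ∧ τ d = a) := by
  have happ : ∀ x, τ x = swap a b (swap b c (swap c d (σ₀ x))) := fun x => by rw [hτ]; rfl
  have main : ∀ (ha : σ₀ a = a) (hb : σ₀ b = b) (hc : σ₀ c = c) (hd : σ₀ d = d),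
      τ a = b ∧ τ b = c ∧ τ c = d ∧ τ d = a ∧
      minimalPeriod ⇑τ a = 4 ∧ minimalPeriod ⇑τ b = 4 ∧
      minimalPeriod ⇑τ c = 4 ∧ minimalPeriod ⇑τ d = 4 ∧
      (∀ x, x ≠ a → x ≠ b → x ≠ c → x ≠ d →
        minimalPeriod ⇑τ x = minimalPeriod ⇑σ₀ x) := by
    intro ha hb hc hd
    set τ₁ := swap c d * σ₀ with hτ₁
    set τ₂ := swap b c * τ₁ with hτ₂
    have hττ₂ : τ = swap a b * τ₂ := by rw [hτ, hτ₂, hτ₁]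
    obtain ⟨I1, I2, I3, I4⟩ := insert_lemma σ₀ c d hc hdc
    rw [← hτ₁] at I1 I2 I3 I4
    have hτ₁a : τ₁ a = a := by
      show swap c d (σ₀ a) = a
      rw [ha]; exact swap_apply_of_ne_of_ne (Ne.symm hca) (Ne.symm hda)
    have hτ₁b : τ₁ b = b := by
      show swap c d (σ₀ b) = b
      rw [hb]; exact swap_apply_of_ne_of_ne (Ne.symm hcb) (Ne.symm hdb)
    have hτ₁c : τ₁ c = d := by
      show swap c d (σ₀ c) = d
      rw [hc]; exact swap_apply_left c d
    have hτ₁d : τ₁ d = c := by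
      show swap c d (σ₀ d) = c
      rw [hd]; exact swap_apply_right c d
    obtain ⟨J1, J2, J3, J4⟩ := insert_lemma τ₁ b c hτ₁b hcb
    rw [← hτ₂] at J1 J2 J3 J4
    have hτ₂a : τ₂ a = a := by
      show swap b c (τ₁ a) = a
      rw [hτ₁a]; exact swap_apply_of_ne_of_ne (Ne.symm hba) (Ne.symm hca)
    have hτ₂b : τ₂ b = c := by
      show swap b c (τ₁ b) = c
      rw [hτ₁b]; exact swap_apply_left b c
    have hτ₂c : τ₂ c = d := by
      show swap b c (τ₁ c) = d
      rw [hτ₁c]; exact swap_apply_of_ne_of_ne hdb hdc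
    have hτ₂d : τ₂ d = b := by
      show swap b c (τ₁ d) = b
      rw [hτ₁d]; exact swap_apply_right b c
    obtain ⟨K1, K2, K3, K4⟩ := insert_lemma τ₂ a b hτ₂a hba
    rw [← hττ₂] at K1 K2 K3 K4
    have hτa : τ a = b := by rw [hττ₂]; show swap a b (τ₂ a) = b; rw [hτ₂a]; exact swap_apply_left a b
    have hτb : τ b = c := by rw [hττ₂]; show swap a b (τ₂ b) = c; rw [hτ₂b]; exact swap_apply_of_ne_of_ne hca hcb
    have hτc : τ c = d := by rw [hττ₂]; show swap a b (τ₂ c) = d; rw [hτ₂c]; exact swap_apply_of_ne_of_ne hda hdb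
    have hτd : τ d = a := by rw [hττ₂]; show swap a b (τ₂ d) = a; rw [hτ₂d]; exact swap_apply_right a b
    have hmpd : minimalPeriod ⇑σ₀ d = 1 := minimalPeriod_eq_one_iff_isFixedPt.mpr hd
    have hmpa : minimalPeriod ⇑τ a = 4 := by rw [K1, J1, I1, hmpd]
    have hmpb : minimalPeriod ⇑τ b = 4 := by
      have : b = (⇑τ)^[1] a := by simp [hτa]
      rw [this, mp_iterate, hmpa]
    have hmpc : minimalPeriod ⇑τ c = 4 := by
      have : c = (⇑τ)^[2] a := by
        simp only [Function.iterate_succ_apply', Function.iterate_zero_apply]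
        rw [hτa, hτb]
      rw [this, mp_iterate, hmpa]
    have hmpd' : minimalPeriod ⇑τ d = 4 := by
      have : d = (⇑τ)^[3] a := by
        simp only [Function.iterate_succ_apply', Function.iterate_zero_apply]
        rw [hτa, hτb, hτc]
      rw [this, mp_iterate, hmpa]
    refine ⟨hτa, hτb, hτc, hτd, hmpa, hmpb, hmpc, hmpd', ?_⟩
    intro x hxa hxb hxc hxd
    have hR0 : ¬ R σ₀ d x := fun h => hxd (R_fixed hd h)
    have hR1 : ¬ R τ₁ c x := fun h => ((I4 x).mp h).elim hxc hR0
    have hR2 : ¬ R τ₂ b x := fun h => ((J4 x).mp h).elim hxb hR1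
    rw [K3 x hxa hR2, J3 x hxb hR1, I3 x hxc hR0]
  constructor
  · rintro ⟨hfix, hdvd⟩
    have ha : σ₀ a = a := hfix a (by simp)
    have hb : σ₀ b = b := hfix b (by simp)
    have hc : σ₀ c = c := hfix c (by simp)
    have hd : σ₀ d = d := hfix d (by simp)
    obtain ⟨h1, h2, h3, h4, h5, h6, h7, h8, h9⟩ := main ha hb hc hd
    refine ⟨?_, h1, h2, h3, h4⟩
    intro x
    by_cases hxa : x = a
    · rw [hxa, h5]
    by_cases hxb : x = b
    · rw [hxb, h6]
    by_cases hxc : x = c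
    · rw [hxc, h7]
    by_cases hxd : x = d
    · rw [hxd, h8]
    rw [h9 x hxa hxb hxc hxd]
    exact hdvd x ⟨hxa, hxb, hxc, hxd⟩
  · rintro ⟨hP, hτa, hτb, hτc, hτd⟩
    have ha : σ₀ a = a := by
      have h1 := (happ a).symm.trans hτa
      have h2 := (swap a b).injective (h1.trans (swap_apply_left a b).symm)
      have h3 := (swap b c).injective
        (h2.trans (swap_apply_of_ne_of_ne (Ne.symm hba) (Ne.symm hca)).symm)
      exact (swap c d).injective
        (h3.trans (swap_apply_of_ne_of_ne (Ne.symm hca) (Ne.symm hda)).symm)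
    have hb : σ₀ b = b := by
      have h1 := (happ b).symm.trans hτb
      have h2 := (swap a b).injective
        (h1.trans (swap_apply_of_ne_of_ne hca hcb).symm)
      have h3 := (swap b c).injective (h2.trans (swap_apply_left b c).symm)
      exact (swap c d).injective
        (h3.trans (swap_apply_of_ne_of_ne (Ne.symm hcb) (Ne.symm hdb)).symm)
    have hc : σ₀ c = c := by
      have h1 := (happ c).symm.trans hτc
      have h2 := (swap a b).injective
        (h1.trans (swap_apply_of_ne_of_ne hda hdb).symm)
      have h3 := (swap b c).injective
        (h2.trans (swap_apply_of_ne_of_ne hdb hdc).symm)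
      exact (swap c d).injective (h3.trans (swap_apply_left c d).symm)
    have hd : σ₀ d = d := by
      have h1 := (happ d).symm.trans hτd
      have h2 := (swap a b).injective (h1.trans (swap_apply_right a b).symm)
      have h3 := (swap b c).injective (h2.trans (swap_apply_right b c).symm)
      exact (swap c d).injective (h3.trans (swap_apply_right c d).symm)
    obtain ⟨h1, h2, h3, h4, h5, h6, h7, h8, h9⟩ := main ha hb hc hd
    refine ⟨?_, ?_⟩
    · intro x hx
      by_cases hxa : x = a
      · rw [hxa, ha]
      by_cases hxb : x = b
      · rw [hxb, hb]
      by_cases hxc : x = c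
      · rw [hxc, hc]
      have hxd : x = d := by tauto
      rw [hxd, hd]
    · intro x ⟨hxa, hxb, hxc, hxd⟩
      have := hP x
      rwa [h9 x hxa hxb hxc hxd] at this

lemma surgery4 (a b c d e : α) (hba : b ≠ a) (hca : c ≠ a) (hcb : c ≠ b)
    (hda : d ≠ a) (hdb : d ≠ b) (hdc : d ≠ c)
    (hea : e ≠ a) (heb : e ≠ b) (hec : e ≠ c) (hed : e ≠ d) (σ₀ τ : Perm α)
    (hτ : τ = swap a b * (swap b c * (swap c d * (swap d e * σ₀)))) :
    ((∀ x, ¬(x ≠ a ∧ x ≠ b ∧ x ≠ c ∧ x ≠ d) → σ₀ x = x) ∧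
      (∀ x, (x ≠ a ∧ x ≠ b ∧ x ≠ c ∧ x ≠ d) → 4 ∣ minimalPeriod ⇑σ₀ x))
    ↔ ((∀ x, 4 ∣ minimalPeriod ⇑τ x) ∧ τ a = b ∧ τ b = c ∧ τ c = d ∧ τ d = e) := by
  have happ : ∀ x, τ x = swap a b (swap b c (swap c d (swap d e (σ₀ x)))) :=
    fun x => by rw [hτ]; rfl
  have main : ∀ (ha : σ₀ a = a) (hb : σ₀ b = b) (hc : σ₀ c = c) (hd : σ₀ d = d),
      τ a = b ∧ τ b = c ∧ τ c = d ∧ τ d = e ∧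
      minimalPeriod ⇑τ a = minimalPeriod ⇑σ₀ e + 4 ∧
      minimalPeriod ⇑τ b = minimalPeriod ⇑σ₀ e + 4 ∧
      minimalPeriod ⇑τ c = minimalPeriod ⇑σ₀ e + 4 ∧
      minimalPeriod ⇑τ d = minimalPeriod ⇑σ₀ e + 4 ∧
      (∀ x, x ≠ a → x ≠ b → x ≠ c → x ≠ d → R σ₀ e x →
        minimalPeriod ⇑τ x = minimalPeriod ⇑σ₀ x + 4) ∧
      (∀ x, x ≠ a → x ≠ b → x ≠ c → x ≠ d → ¬ R σ₀ e x →
        minimalPeriod ⇑τ x = minimalPeriod ⇑σ₀ x) := by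
    intro ha hb hc hd
    set τ₁ := swap d e * σ₀ with hτ₁
    set τ₂ := swap c d * τ₁ with hτ₂
    set τ₃ := swap b c * τ₂ with hτ₃
    have hττ₃ : τ = swap a b * τ₃ := by rw [hτ, hτ₃, hτ₂, hτ₁]
    obtain ⟨I1, I2, I3, I4⟩ := insert_lemma σ₀ d e hd hed
    rw [← hτ₁] at I1 I2 I3 I4
    have hτ₁a : τ₁ a = a := by
      show swap d e (σ₀ a) = a
      rw [ha]; exact swap_apply_of_ne_of_ne (Ne.symm hda) (Ne.symm hea)
    have hτ₁b : τ₁ b = b := by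
      show swap d e (σ₀ b) = b
      rw [hb]; exact swap_apply_of_ne_of_ne (Ne.symm hdb) (Ne.symm heb)
    have hτ₁c : τ₁ c = c := by
      show swap d e (σ₀ c) = c
      rw [hc]; exact swap_apply_of_ne_of_ne (Ne.symm hdc) (Ne.symm hec)
    have hτ₁d : τ₁ d = e := by
      show swap d e (σ₀ d) = e
      rw [hd]; exact swap_apply_left d e
    obtain ⟨J1, J2, J3, J4⟩ := insert_lemma τ₁ c d hτ₁c hdc
    rw [← hτ₂] at J1 J2 J3 J4
    have hτ₂a : τ₂ a = a := by
      show swap c d (τ₁ a) = a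
      rw [hτ₁a]; exact swap_apply_of_ne_of_ne (Ne.symm hca) (Ne.symm hda)
    have hτ₂b : τ₂ b = b := by
      show swap c d (τ₁ b) = b
      rw [hτ₁b]; exact swap_apply_of_ne_of_ne (Ne.symm hcb) (Ne.symm hdb)
    have hτ₂c : τ₂ c = d := by
      show swap c d (τ₁ c) = d
      rw [hτ₁c]; exact swap_apply_left c d
    have hτ₂d : τ₂ d = e := by
      show swap c d (τ₁ d) = e
      rw [hτ₁d]; exact swap_apply_of_ne_of_ne hec hed
    obtain ⟨K1, K2, K3, K4⟩ := insert_lemma τ₂ b c hτ₂b hcb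
    rw [← hτ₃] at K1 K2 K3 K4
    have hτ₃a : τ₃ a = a := by
      show swap b c (τ₂ a) = a
      rw [hτ₂a]; exact swap_apply_of_ne_of_ne (Ne.symm hba) (Ne.symm hca)
    have hτ₃b : τ₃ b = c := by
      show swap b c (τ₂ b) = c
      rw [hτ₂b]; exact swap_apply_left b c
    have hτ₃c : τ₃ c = d := by
      show swap b c (τ₂ c) = d
      rw [hτ₂c]; exact swap_apply_of_ne_of_ne hdb hdc
    have hτ₃d : τ₃ d = e := by
      show swap b c (τ₂ d) = e
      rw [hτ₂d]; exact swap_apply_of_ne_of_ne heb hec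
    obtain ⟨L1, L2, L3, L4⟩ := insert_lemma τ₃ a b hτ₃a hba
    rw [← hττ₃] at L1 L2 L3 L4
    have hτa : τ a = b := by
      rw [hττ₃]; show swap a b (τ₃ a) = b; rw [hτ₃a]; exact swap_apply_left a b
    have hτb : τ b = c := by
      rw [hττ₃]; show swap a b (τ₃ b) = c; rw [hτ₃b]
      exact swap_apply_of_ne_of_ne hca hcb
    have hτc : τ c = d := by
      rw [hττ₃]; show swap a b (τ₃ c) = d; rw [hτ₃c]
      exact swap_apply_of_ne_of_ne hda hdb
    have hτd : τ d = e := by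
      rw [hττ₃]; show swap a b (τ₃ d) = e; rw [hτ₃d]
      exact swap_apply_of_ne_of_ne hea heb
    have hmpa : minimalPeriod ⇑τ a = minimalPeriod ⇑σ₀ e + 4 := by
      rw [L1, K1, J1, I1]
    have hmpb : minimalPeriod ⇑τ b = minimalPeriod ⇑σ₀ e + 4 := by
      have : b = (⇑τ)^[1] a := by simp [hτa]
      rw [this, mp_iterate, hmpa]
    have hmpc : minimalPeriod ⇑τ c = minimalPeriod ⇑σ₀ e + 4 := by
      have : c = (⇑τ)^[2] a := by
        simp only [Function.iterate_succ_apply', Function.iterate_zero_apply]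
        rw [hτa, hτb]
      rw [this, mp_iterate, hmpa]
    have hmpd' : minimalPeriod ⇑τ d = minimalPeriod ⇑σ₀ e + 4 := by
      have : d = (⇑τ)^[3] a := by
        simp only [Function.iterate_succ_apply', Function.iterate_zero_apply]
        rw [hτa, hτb, hτc]
      rw [this, mp_iterate, hmpa]
    refine ⟨hτa, hτb, hτc, hτd, hmpa, hmpb, hmpc, hmpd', ?_, ?_⟩
    · intro x hxa hxb hxc hxd hR
      have hR1 : R τ₁ d x := (I4 x).mpr (Or.inr hR)
      have hR2 : R τ₂ c x := (J4 x).mpr (Or.inr hR1)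
      have hR3 : R τ₃ b x := (K4 x).mpr (Or.inr hR2)
      rw [L2 x hR3, K2 x hR2, J2 x hR1, I2 x hR]
    · intro x hxa hxb hxc hxd hR
      have hR1 : ¬ R τ₁ d x := fun h => ((I4 x).mp h).elim hxd hR
      have hR2 : ¬ R τ₂ c x := fun h => ((J4 x).mp h).elim hxc hR1
      have hR3 : ¬ R τ₃ b x := fun h => ((K4 x).mp h).elim hxb hR2
      rw [L3 x hxa hR3, K3 x hxb hR2, J3 x hxc hR1, I3 x hxd hR]
  have h4dvd : ∀ k : ℕ, 4 ∣ k + 4 ↔ 4 ∣ k := fun k => by omega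
  constructor
  · rintro ⟨hfix, hdvd⟩
    have ha : σ₀ a = a := hfix a (by simp)
    have hb : σ₀ b = b := hfix b (by simp)
    have hc : σ₀ c = c := hfix c (by simp)
    have hd : σ₀ d = d := hfix d (by simp)
    obtain ⟨h1, h2, h3, h4, h5, h6, h7, h8, h9, h10⟩ := main ha hb hc hd
    have hde : 4 ∣ minimalPeriod ⇑σ₀ e := hdvd e ⟨hea, heb, hec, hed⟩
    refine ⟨?_, h1, h2, h3, h4⟩
    intro x
    by_cases hxa : x = a
    · rw [hxa, h5, h4dvd]; exact hde
    by_cases hxb : x = b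
    · rw [hxb, h6, h4dvd]; exact hde
    by_cases hxc : x = c
    · rw [hxc, h7, h4dvd]; exact hde
    by_cases hxd : x = d
    · rw [hxd, h8, h4dvd]; exact hde
    by_cases hR : R σ₀ e x
    · rw [h9 x hxa hxb hxc hxd hR, h4dvd]
      exact hdvd x ⟨hxa, hxb, hxc, hxd⟩
    · rw [h10 x hxa hxb hxc hxd hR]
      exact hdvd x ⟨hxa, hxb, hxc, hxd⟩
  · rintro ⟨hP, hτa, hτb, hτc, hτd⟩
    have ha : σ₀ a = a := by
      have h1 := (happ a).symm.trans hτa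
      have h2 := (swap a b).injective (h1.trans (swap_apply_left a b).symm)
      have h3 := (swap b c).injective
        (h2.trans (swap_apply_of_ne_of_ne (Ne.symm hba) (Ne.symm hca)).symm)
      have h4 := (swap c d).injective
        (h3.trans (swap_apply_of_ne_of_ne (Ne.symm hca) (Ne.symm hda)).symm)
      exact (swap d e).injective
        (h4.trans (swap_apply_of_ne_of_ne (Ne.symm hda) (Ne.symm hea)).symm)
    have hb : σ₀ b = b := by
      have h1 := (happ b).symm.trans hτb
      have h2 := (swap a b).injective
        (h1.trans (swap_apply_of_ne_of_ne hca hcb).symm)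
      have h3 := (swap b c).injective (h2.trans (swap_apply_left b c).symm)
      have h4 := (swap c d).injective
        (h3.trans (swap_apply_of_ne_of_ne (Ne.symm hcb) (Ne.symm hdb)).symm)
      exact (swap d e).injective
        (h4.trans (swap_apply_of_ne_of_ne (Ne.symm hdb) (Ne.symm heb)).symm)
    have hc : σ₀ c = c := by
      have h1 := (happ c).symm.trans hτc
      have h2 := (swap a b).injective
        (h1.trans (swap_apply_of_ne_of_ne hda hdb).symm)
      have h3 := (swap b c).injective
        (h2.trans (swap_apply_of_ne_of_ne hdb hdc).symm)
      have h4 := (swap c d).injective (h3.trans (swap_apply_left c d).symm)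
      exact (swap d e).injective
        (h4.trans (swap_apply_of_ne_of_ne (Ne.symm hdc) (Ne.symm hec)).symm)
    have hd : σ₀ d = d := by
      have h1 := (happ d).symm.trans hτd
      have h2 := (swap a b).injective
        (h1.trans (swap_apply_of_ne_of_ne hea heb).symm)
      have h3 := (swap b c).injective
        (h2.trans (swap_apply_of_ne_of_ne heb hec).symm)
      have h4 := (swap c d).injective
        (h3.trans (swap_apply_of_ne_of_ne hec hed).symm)
      exact (swap d e).injective (h4.trans (swap_apply_left d e).symm)
    obtain ⟨h1, h2, h3, h4, h5, h6, h7, h8, h9, h10⟩ := main ha hb hc hd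
    refine ⟨?_, ?_⟩
    · intro x hx
      by_cases hxa : x = a
      · rw [hxa, ha]
      by_cases hxb : x = b
      · rw [hxb, hb]
      by_cases hxc : x = c
      · rw [hxc, hc]
      have hxd : x = d := by tauto
      rw [hxd, hd]
    · intro x ⟨hxa, hxb, hxc, hxd⟩
      by_cases hR : R σ₀ e x
      · have := hP x
        rwa [h9 x hxa hxb hxc hxd hR, h4dvd] at this
      · have := hP x
        rwa [h10 x hxa hxb hxc hxd hR] at this

lemma filt_card (P : Perm α → Prop) [DecidablePred P] :
    (univ.filter P).card = Nat.card {σ : Perm α // P σ} := by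
  rw [Nat.card_eq_fintype_card, Fintype.card_subtype]

lemma card_cond1 (a : α) : Fintype.card {x : α // x ≠ a} = Fintype.card α - 1 := by
  rw [Fintype.card_subtype]
  have : univ.filter (fun x : α => x ≠ a) = univ \ {a} := by
    ext x; simp
  rw [this, card_sdiff_of_subset (by simp), card_univ, card_singleton]

lemma card_cond2 {a b : α} (hba : b ≠ a) :
    Fintype.card {x : α // x ≠ a ∧ x ≠ b} = Fintype.card α - 2 := by
  rw [Fintype.card_subtype]
  have : univ.filter (fun x : α => x ≠ a ∧ x ≠ b) = univ \ {a, b} := by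
    ext x; simp [not_or]
  rw [this, card_sdiff_of_subset (by simp), card_univ]
  congr 1
  rw [card_insert_of_notMem (by simp [hba.symm]), card_singleton]

lemma card_cond4 {a b c d : α} (hba : b ≠ a) (hca : c ≠ a) (hcb : c ≠ b)
    (hda : d ≠ a) (hdb : d ≠ b) (hdc : d ≠ c) :
    Fintype.card {x : α // x ≠ a ∧ x ≠ b ∧ x ≠ c ∧ x ≠ d} = Fintype.card α - 4 := by
  rw [Fintype.card_subtype]
  have : univ.filter (fun x : α => x ≠ a ∧ x ≠ b ∧ x ≠ c ∧ x ≠ d) = univ \ {a, b, c, d} := by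
    ext x; simp [not_or]
  rw [this, card_sdiff_of_subset (by simp), card_univ]
  congr 1
  rw [card_insert_of_notMem (by simp [hba.symm, hca.symm, hda.symm]),
    card_insert_of_notMem (by simp [hcb.symm, hdb.symm]),
    card_insert_of_notMem (by simp [hdc.symm]), card_singleton]

lemma sum_eq_card_mul {β : Type*} [Fintype β] [DecidableEq β] (f : β → ℕ) (T : Finset β) (v : ℕ)
    (h0 : ∀ y ∉ T, f y = 0) (h1 : ∀ y ∈ T, f y = v) :
    ∑ y, f y = T.card * v := by
  rw [← Finset.sum_subset (Finset.subset_univ T) (fun y _ hy => h0 y hy),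
    Finset.sum_congr rfl h1, Finset.sum_const, smul_eq_mul]

lemma cnt_zero (p : ℕ → Prop) : cnt p 0 = 1 := by
  have e : {σ : Perm (Fin 0) // ∀ x, p (Function.minimalPeriod ⇑σ x)} ≃ Perm (Fin 0) :=
    Equiv.subtypeUnivEquiv (fun σ x => x.elim0)
  rw [cnt, Nat.card_congr e, Nat.card_eq_fintype_card]
  simp

lemma cnt_odd_one : cnt Odd 1 = 1 := by
  have e : {σ : Perm (Fin 1) // ∀ x, Odd (Function.minimalPeriod ⇑σ x)} ≃ Perm (Fin 1) := by
    refine Equiv.subtypeUnivEquiv (fun σ x => ?_)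
    have hfix : σ x = x := by
      have : σ = 1 := Subsingleton.elim _ _
      rw [this]; rfl
    rw [Function.minimalPeriod_eq_one_iff_isFixedPt.mpr hfix]
    exact odd_one
  rw [cnt, Nat.card_congr e, Nat.card_eq_fintype_card]
  simp

lemma cnt4_small (k : ℕ) (h0 : 0 < k) (h6 : ¬ (4 ∣ Nat.factorial k)) :
    cnt (fun m => 4 ∣ m) k = 0 := by
  have : IsEmpty {σ : Perm (Fin k) // ∀ x, 4 ∣ Function.minimalPeriod ⇑σ x} := by
    refine ⟨fun ⟨σ, hσ⟩ => ?_⟩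
    have x : Fin k := ⟨0, h0⟩
    have h1 : Function.minimalPeriod ⇑σ x ∣ Nat.factorial k := by
      rw [mp_dvd_iff]
      have : σ ^ (Nat.factorial k) = 1 := by
        have := pow_card_eq_one (G := Perm (Fin k)) (x := σ)
        rwa [Fintype.card_perm, Fintype.card_fin] at this
      show (⇑(σ ^ Nat.factorial k)) x = x
      rw [this]; rfl
    exact h6 (dvd_trans (hσ x) h1)
  rw [cnt, Nat.card_of_isEmpty]

lemma odd_rec (n : ℕ) : cnt Odd (n + 2) = cnt Odd (n + 1) + (n + 1) * n * cnt Odd n := by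
  classical
  set α' := Fin (n + 2) with hα'
  have a : α' := ⟨0, by omega⟩
  set P : Perm α' → Prop := fun σ => ∀ x, Odd (Function.minimalPeriod ⇑σ x) with hPdef
  have hcard : Fintype.card α' = n + 2 := Fintype.card_fin _
  have key : cnt Odd (n + 2) = (univ.filter P).card := (filt_card P).symm
  rw [key, Finset.card_eq_sum_card_fiberwise
    (f := fun σ => (σ a, σ (σ a))) (t := univ) (fun x _ => mem_univ _)]
  set G : Finset (α' × α') := (univ.erase a).offDiag with hG
  have haG : (a, a) ∉ G := by
    intro h
    exact (notMem_erase a univ) (Finset.mem_offDiag.mp h).1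
  set T : Finset (α' × α') := insert (a, a) G with hT
  have hcent : ((univ.filter P).filter (fun σ => (σ a, σ (σ a)) = (a, a))).card
      = cnt Odd (n + 1) := by
    have hfilt : (univ.filter P).filter (fun σ => (σ a, σ (σ a)) = (a, a)) =
        univ.filter (fun σ => P σ ∧ σ a = a) := by
      rw [Finset.filter_filter]
      apply Finset.filter_congr
      intro σ _
      simp only [Prod.mk.injEq]
      constructor
      · rintro ⟨h1, h2, h3⟩; exact ⟨h1, h2⟩
      · rintro ⟨h1, h2⟩; exact ⟨h1, h2, by rw [h2, h2]⟩
    rw [hfilt, filt_card]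
    have hiff : ∀ σ : Perm α', (P σ ∧ σ a = a) ↔
        ((∀ x, ¬(x ≠ a) → σ x = x) ∧
          (∀ x, x ≠ a → Odd (Function.minimalPeriod ⇑σ x))) := by
      intro σ
      constructor
      · rintro ⟨hP, ha⟩
        exact ⟨fun x hx => by rw [not_not.mp hx]; exact ha, fun x _ => hP x⟩
      · rintro ⟨hfix, hodd⟩
        have ha : σ a = a := hfix a (by simp)
        refine ⟨fun x => ?_, ha⟩
        by_cases hxa : x = a
        · rw [hxa, Function.minimalPeriod_eq_one_iff_isFixedPt.mpr ha]
          exact odd_one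
        · exact hodd x hxa
    rw [Nat.card_congr (Equiv.subtypeEquivRight hiff),
      card_fix_outside Odd (fun x => x ≠ a), card_cond1, hcard]
    norm_num
  have hgood : ∀ y ∈ G, ((univ.filter P).filter (fun σ => (σ a, σ (σ a)) = y)).card
      = cnt Odd n := by
    rintro ⟨b, t⟩ hyG
    obtain ⟨hbmem, htmem, hbt⟩ := Finset.mem_offDiag.mp hyG
    have hba : b ≠ a := (mem_erase.mp hbmem).1
    have hta : t ≠ a := (mem_erase.mp htmem).1
    have htb : t ≠ b := hbt.symm
    have hfilt : (univ.filter P).filter (fun σ => (σ a, σ (σ a)) = (b, t)) =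
        univ.filter (fun σ => P σ ∧ σ a = b ∧ σ b = t) := by
      rw [Finset.filter_filter]
      apply Finset.filter_congr
      intro σ _
      simp only [Prod.mk.injEq]
      constructor
      · rintro ⟨h1, h2, h3⟩
        exact ⟨h1, h2, by rw [← h2]; exact h3⟩
      · rintro ⟨h1, h2, h3⟩
        exact ⟨h1, h2, by rw [h2]; exact h3⟩
    rw [hfilt, filt_card]
    set g : Perm α' := swap a b * swap b t with hg
    have hiff : ∀ σ₀ : Perm α',
        ((∀ x, ¬(x ≠ a ∧ x ≠ b) → σ₀ x = x) ∧
          (∀ x, (x ≠ a ∧ x ≠ b) → Odd (Function.minimalPeriod ⇑σ₀ x))) ↔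
        (P (g * σ₀) ∧ (g * σ₀) a = b ∧ (g * σ₀) b = t) := fun σ₀ =>
      surgery2 a b t hba hta htb σ₀ (g * σ₀) (by rw [hg, mul_assoc])
    have E := Equiv.subtypeEquiv (q := fun σ => P σ ∧ σ a = b ∧ σ b = t)
      (Equiv.mulLeft g) hiff
    rw [(Nat.card_congr E).symm,
      card_fix_outside Odd (fun x => x ≠ a ∧ x ≠ b), card_cond2 hba, hcard]
    norm_num
  have h0 : ∀ y ∈ (univ : Finset (α' × α')), y ∉ T →
      ((univ.filter P).filter (fun σ => (σ a, σ (σ a)) = y)).card = 0 := by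
    rintro ⟨b, t⟩ - hyT
    rw [Finset.card_eq_zero, Finset.filter_eq_empty_iff]
    intro σ hσ heq
    have hP : P σ := (Finset.mem_filter.mp hσ).2
    obtain ⟨hab, hat⟩ : σ a = b ∧ σ (σ a) = t := by simpa [Prod.ext_iff] using heq
    by_cases hba : b = a
    · apply hyT
      have h1 : σ a = a := by rw [hab, hba]
      have h2 : t = a := by rw [← hat, h1, h1]
      rw [hT, hba, h2]
      exact mem_insert_self _ _
    · have hyG : (b, t) ∉ G := fun h => hyT (mem_insert_of_mem h)
      have htav : t = a ∨ t = b := by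
        by_contra hcon
        push_neg at hcon
        refine hyG ?_
        rw [hG]
        exact Finset.mem_offDiag.mpr ⟨mem_erase.mpr ⟨hba, mem_univ _⟩,
          mem_erase.mpr ⟨hcon.1, mem_univ _⟩, fun h => hcon.2 h.symm⟩
      rcases htav with h | h
      · rw [h] at hat
        have h2 : (⇑σ)^[2] a = a := by
          show σ (σ a) = a
          exact hat
        have hdvd : Function.minimalPeriod ⇑σ a ∣ 2 := mp_dvd_iff.mpr h2
        have hne1 : σ a ≠ a := by rw [hab]; exact fun h => hba h
        have hne1' : Function.minimalPeriod ⇑σ a ≠ 1 :=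
          fun h => hne1 (Function.minimalPeriod_eq_one_iff_isFixedPt.mp h)
        obtain ⟨m, hm⟩ := hP a
        have hle := Nat.le_of_dvd (by norm_num) hdvd
        have hpos := mp_pos σ a
        omega
      · rw [h, hab] at hat
        exact hba (σ.injective (hab.trans hat.symm)).symm
  rw [← Finset.sum_subset (Finset.subset_univ T) (fun y hy hyT => h0 y hy hyT), hT,
    Finset.sum_insert haG, hcent, Finset.sum_congr rfl hgood, Finset.sum_const, smul_eq_mul]
  have hGcard : G.card = (n + 1) * n := by
    rw [hG, Finset.offDiag_card, card_erase_of_mem (mem_univ a), card_univ, hcard]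
    show (n + 1) * (n + 1) - (n + 1) = (n + 1) * n
    refine Nat.sub_eq_of_eq_add ?_
    ring
  rw [hGcard]

lemma no_small_cycle {σ : Perm α} {x : α} (hP : 4 ∣ Function.minimalPeriod ⇑σ x)
    {k : ℕ} (hk0 : 0 < k) (hk : k < 4) (hx : (⇑σ)^[k] x = x) : False := by
  have hdvd : Function.minimalPeriod ⇑σ x ∣ k := mp_dvd_iff.mpr hx
  have hle := Nat.le_of_dvd hk0 hdvd
  have h4 := Nat.le_of_dvd (mp_pos σ x) hP
  omega

lemma div4_rec (n : ℕ) :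
    cnt (fun m => 4 ∣ m) (n + 4) =
      (n + 3) * ((n + 2) * ((n + 1) * ((n + 1) * cnt (fun m => 4 ∣ m) n))) := by
  classical
  set α' := Fin (n + 4) with hα'
  have a : α' := ⟨0, by omega⟩
  set P : Perm α' → Prop := fun σ => ∀ x, 4 ∣ Function.minimalPeriod ⇑σ x with hPdef
  have hcard : Fintype.card α' = n + 4 := Fintype.card_fin _
  -- level 4
  have level4 : ∀ b c d : α', b ≠ a → c ≠ a → c ≠ b → d ≠ a → d ≠ b → d ≠ c →
      (univ.filter (fun σ => P σ ∧ σ a = b ∧ σ b = c ∧ σ c = d)).card =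
        (n + 1) * cnt (fun m => 4 ∣ m) n := by
    intro b c d hba hca hcb hda hdb hdc
    rw [Finset.card_eq_sum_card_fiberwise (f := fun σ => σ d) (t := univ)
      (fun x _ => mem_univ _)]
    set T4 : Finset α' := insert a (univ \ {a, b, c, d}) with hT4
    have hT4card : T4.card = n + 1 := by
      rw [hT4, card_insert_of_notMem (by simp), card_sdiff_of_subset (by simp), card_univ, hcard]
      have h4 : ({a, b, c, d} : Finset α').card = 4 := by
        rw [card_insert_of_notMem (by simp [hba.symm, hca.symm, hda.symm]),
          card_insert_of_notMem (by simp [hcb.symm, hdb.symm]),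
          card_insert_of_notMem (by simp [hdc.symm]), card_singleton]
      rw [h4]
      omega
    rw [sum_eq_card_mul _ T4 (cnt (fun m => 4 ∣ m) n) ?_ ?_, hT4card]
    · -- zero outside T4
      intro e heT
      rw [Finset.card_eq_zero, Finset.filter_eq_empty_iff]
      intro σ hσ heq
      obtain ⟨hP', hab, hbc, hcd⟩ := (Finset.mem_filter.mp hσ).2
      have hea : e ≠ a := fun h => heT (by rw [hT4, h]; exact mem_insert_self _ _)
      have hmem : e ∈ ({a, b, c, d} : Finset α') := by
        by_contra hcon
        exact heT (by rw [hT4]; exact mem_insert_of_mem (mem_sdiff.mpr ⟨mem_univ _, hcon⟩))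
      simp only [mem_insert, mem_singleton] at hmem
      rcases hmem with h | h | h | h
      · exact hea h
      · have h2 : σ d = σ a := by rw [heq, h, hab]
        exact hda (σ.injective h2)
      · have h2 : σ d = σ b := by rw [heq, h, hbc]
        exact hdb (σ.injective h2)
      · have h2 : σ c = σ d := by rw [hcd, heq, h]
        exact hdc (σ.injective h2.symm)
    · -- value on T4
      intro e heT
      have hfilt : (univ.filter (fun σ => P σ ∧ σ a = b ∧ σ b = c ∧ σ c = d)).filter
          (fun σ => σ d = e) =
          univ.filter (fun σ => P σ ∧ σ a = b ∧ σ b = c ∧ σ c = d ∧ σ d = e) := by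
        ext σ
        simp only [Finset.mem_filter, mem_univ, true_and]
        tauto
      rw [hfilt, filt_card]
      rw [hT4] at heT
      rcases mem_insert.mp heT with h | hmem
      · -- e = a : the 4-cycle case
        rw [h]
        set g : Perm α' := swap a b * (swap b c * swap c d) with hg
        have hiff : ∀ σ₀ : Perm α',
            ((∀ x, ¬(x ≠ a ∧ x ≠ b ∧ x ≠ c ∧ x ≠ d) → σ₀ x = x) ∧
              (∀ x, (x ≠ a ∧ x ≠ b ∧ x ≠ c ∧ x ≠ d) →
                4 ∣ Function.minimalPeriod ⇑σ₀ x)) ↔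
            (P (g * σ₀) ∧ (g * σ₀) a = b ∧ (g * σ₀) b = c ∧ (g * σ₀) c = d ∧
              (g * σ₀) d = a) := fun σ₀ =>
          surgery3 a b c d hba hca hcb hda hdb hdc σ₀ (g * σ₀)
            (by rw [hg, mul_assoc, mul_assoc])
        have E := Equiv.subtypeEquiv
          (q := fun σ => P σ ∧ σ a = b ∧ σ b = c ∧ σ c = d ∧ σ d = a)
          (Equiv.mulLeft g) hiff
        rw [(Nat.card_congr E).symm,
          card_fix_outside (fun m => 4 ∣ m) (fun x => x ≠ a ∧ x ≠ b ∧ x ≠ c ∧ x ≠ d),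
          card_cond4 hba hca hcb hda hdb hdc, hcard]
        norm_num
      · obtain ⟨-, hmem⟩ := mem_sdiff.mp hmem
        simp only [mem_insert, mem_singleton, not_or] at hmem
        obtain ⟨hea, heb, hec, hed⟩ := hmem
        set g : Perm α' := swap a b * (swap b c * (swap c d * swap d e)) with hg
        have hiff : ∀ σ₀ : Perm α',
            ((∀ x, ¬(x ≠ a ∧ x ≠ b ∧ x ≠ c ∧ x ≠ d) → σ₀ x = x) ∧
              (∀ x, (x ≠ a ∧ x ≠ b ∧ x ≠ c ∧ x ≠ d) →
                4 ∣ Function.minimalPeriod ⇑σ₀ x)) ↔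
            (P (g * σ₀) ∧ (g * σ₀) a = b ∧ (g * σ₀) b = c ∧ (g * σ₀) c = d ∧
              (g * σ₀) d = e) := fun σ₀ =>
          surgery4 a b c d e hba hca hcb hda hdb hdc hea heb hec hed σ₀ (g * σ₀)
            (by rw [hg, mul_assoc, mul_assoc, mul_assoc])
        have E := Equiv.subtypeEquiv
          (q := fun σ => P σ ∧ σ a = b ∧ σ b = c ∧ σ c = d ∧ σ d = e)
          (Equiv.mulLeft g) hiff
        rw [(Nat.card_congr E).symm,
          card_fix_outside (fun m => 4 ∣ m) (fun x => x ≠ a ∧ x ≠ b ∧ x ≠ c ∧ x ≠ d),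
          card_cond4 hba hca hcb hda hdb hdc, hcard]
        norm_num
  -- level 3
  have level3 : ∀ b c : α', b ≠ a → c ≠ a → c ≠ b →
      (univ.filter (fun σ => P σ ∧ σ a = b ∧ σ b = c)).card =
        (n + 1) * ((n + 1) * cnt (fun m => 4 ∣ m) n) := by
    intro b c hba hca hcb
    rw [Finset.card_eq_sum_card_fiberwise (f := fun σ => σ c) (t := univ)
      (fun x _ => mem_univ _)]
    set T3 : Finset α' := univ \ {a, b, c} with hT3
    have hT3card : T3.card = n + 1 := by
      rw [hT3, card_sdiff_of_subset (by simp), card_univ, hcard]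
      have h3 : ({a, b, c} : Finset α').card = 3 := by
        rw [card_insert_of_notMem (by simp [hba.symm, hca.symm]),
          card_insert_of_notMem (by simp [hcb.symm]), card_singleton]
      rw [h3]
      omega
    rw [sum_eq_card_mul _ T3 ((n + 1) * cnt (fun m => 4 ∣ m) n) ?_ ?_, hT3card]
    · intro d hdT
      rw [Finset.card_eq_zero, Finset.filter_eq_empty_iff]
      intro σ hσ heq
      obtain ⟨hP', hab, hbc⟩ := (Finset.mem_filter.mp hσ).2
      have hmem : d ∈ ({a, b, c} : Finset α') := by
        by_contra hcon
        exact hdT (by rw [hT3]; exact mem_sdiff.mpr ⟨mem_univ _, hcon⟩)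
      simp only [mem_insert, mem_singleton] at hmem
      rcases hmem with h | h | h
      · -- σ c = a : 3-cycle through a
        refine no_small_cycle (hP' a) (k := 3) (by omega) (by omega) ?_
        show σ (σ (σ a)) = a
        rw [hab, hbc, ← h, heq]
      · have h2 : σ c = σ a := by rw [heq, h, hab]
        exact hca (σ.injective h2)
      · have h2 : σ b = σ c := by rw [hbc, heq, h]
        exact hcb (σ.injective h2.symm)
    · intro d hdT
      rw [hT3] at hdT
      obtain ⟨-, hmem⟩ := mem_sdiff.mp hdT
      simp only [mem_insert, mem_singleton, not_or] at hmem
      obtain ⟨hda, hdb, hdc⟩ := hmem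
      have hfilt : (univ.filter (fun σ => P σ ∧ σ a = b ∧ σ b = c)).filter
          (fun σ => σ c = d) =
          univ.filter (fun σ => P σ ∧ σ a = b ∧ σ b = c ∧ σ c = d) := by
        ext σ
        simp only [Finset.mem_filter, mem_univ, true_and]
        tauto
      rw [hfilt, level4 b c d hba hca hcb hda hdb hdc]
  -- level 2
  have level2 : ∀ b : α', b ≠ a →
      (univ.filter (fun σ => P σ ∧ σ a = b)).card =
        (n + 2) * ((n + 1) * ((n + 1) * cnt (fun m => 4 ∣ m) n)) := by
    intro b hba
    rw [Finset.card_eq_sum_card_fiberwise (f := fun σ => σ b) (t := univ)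
      (fun x _ => mem_univ _)]
    set T2 : Finset α' := univ \ {a, b} with hT2
    have hT2card : T2.card = n + 2 := by
      rw [hT2, card_sdiff_of_subset (by simp), card_univ, hcard]
      have h2 : ({a, b} : Finset α').card = 2 := by
        rw [card_insert_of_notMem (by simp [hba.symm]), card_singleton]
      rw [h2]
      omega
    rw [sum_eq_card_mul _ T2 ((n + 1) * ((n + 1) * cnt (fun m => 4 ∣ m) n)) ?_ ?_, hT2card]
    · intro c hcT
      rw [Finset.card_eq_zero, Finset.filter_eq_empty_iff]
      intro σ hσ heq
      obtain ⟨hP', hab⟩ := (Finset.mem_filter.mp hσ).2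
      have hmem : c ∈ ({a, b} : Finset α') := by
        by_contra hcon
        exact hcT (by rw [hT2]; exact mem_sdiff.mpr ⟨mem_univ _, hcon⟩)
      simp only [mem_insert, mem_singleton] at hmem
      rcases hmem with h | h
      · refine no_small_cycle (hP' a) (k := 2) (by omega) (by omega) ?_
        show σ (σ a) = a
        rw [hab, ← h, heq]
      · have h2 : σ b = σ a := by rw [heq, h, hab]
        exact hba (σ.injective h2)
    · intro c hcT
      rw [hT2] at hcT
      obtain ⟨-, hmem⟩ := mem_sdiff.mp hcT
      simp only [mem_insert, mem_singleton, not_or] at hmem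
      obtain ⟨hca, hcb⟩ := hmem
      have hfilt : (univ.filter (fun σ => P σ ∧ σ a = b)).filter
          (fun σ => σ b = c) =
          univ.filter (fun σ => P σ ∧ σ a = b ∧ σ b = c) := by
        ext σ
        simp only [Finset.mem_filter, mem_univ, true_and]
        tauto
      rw [hfilt, level3 b c hba hca hcb]
  -- level 1
  have key : cnt (fun m => 4 ∣ m) (n + 4) = (univ.filter P).card := (filt_card P).symm
  rw [key, Finset.card_eq_sum_card_fiberwise (f := fun σ => σ a) (t := univ)
    (fun x _ => mem_univ _)]
  set T1 : Finset α' := univ.erase a with hT1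
  have hT1card : T1.card = n + 3 := by
    rw [hT1, card_erase_of_mem (mem_univ a), card_univ, hcard]
    omega
  rw [sum_eq_card_mul _ T1 ((n + 2) * ((n + 1) * ((n + 1) * cnt (fun m => 4 ∣ m) n)))
    ?_ ?_, hT1card]
  · intro b hbT
    rw [Finset.card_eq_zero, Finset.filter_eq_empty_iff]
    intro σ hσ heq
    have hP' : P σ := (Finset.mem_filter.mp hσ).2
    have hba : b = a := by
      by_contra hcon
      exact hbT (by rw [hT1]; exact mem_erase.mpr ⟨hcon, mem_univ _⟩)
    refine no_small_cycle (hP' a) (k := 1) (by omega) (by omega) ?_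
    show σ a = a
    rw [heq, hba]
  · intro b hbT
    rw [hT1] at hbT
    have hba : b ≠ a := (mem_erase.mp hbT).1
    have hfilt : (univ.filter P).filter (fun σ => σ a = b) =
        univ.filter (fun σ => P σ ∧ σ a = b) := by
      ext σ
      simp only [Finset.mem_filter, mem_univ, true_and]
    rw [hfilt, level2 b hba]

/-- double factorial (2k-1)!! -/
def Dd : ℕ → ℕ
  | 0 => 1
  | k + 1 => (2 * k + 1) * Dd k

def Aa : ℕ → ℕ
  | 0 => 1
  | m + 1 => (4 * m + 3) * ((4 * m + 2) * ((4 * m + 1) * ((4 * m + 1) * Aa m)))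

lemma cnt_odd_closed (k : ℕ) :
    cnt Odd (2 * k) = Dd k ^ 2 ∧ cnt Odd (2 * k + 1) = (2 * k + 1) * Dd k ^ 2 := by
  induction k with
  | zero =>
    constructor
    · show cnt Odd 0 = Dd 0 ^ 2
      rw [cnt_zero]; rfl
    · show cnt Odd 1 = (2 * 0 + 1) * Dd 0 ^ 2
      rw [cnt_odd_one]; rfl
  | succ k ih =>
    obtain ⟨h1, h2⟩ := ih
    have e1 : 2 * (k + 1) = (2 * k) + 2 := by ring
    have hDd : Dd (k + 1) = (2 * k + 1) * Dd k := rfl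
    have hA : cnt Odd (2 * (k + 1)) = Dd (k + 1) ^ 2 := by
      rw [e1, odd_rec, h1, h2, hDd]
      ring
    refine ⟨hA, ?_⟩
    have e2 : 2 * (k + 1) + 1 = (2 * k + 1) + 2 := by ring
    have e4 : (2 * k + 1) + 1 = 2 * (k + 1) := by ring
    rw [e2, odd_rec, e4, hA, h2, hDd]
    ring

lemma cnt4_closed (m : ℕ) : cnt (fun k => 4 ∣ k) (4 * m) = Aa m := by
  induction m with
  | zero =>
    show cnt (fun k => 4 ∣ k) 0 = 1
    exact cnt_zero _
  | succ m ih =>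
    have e : 4 * (m + 1) = (4 * m) + 4 := by ring
    rw [e, div4_rec, ih]
    rfl

lemma Dd_pos (k : ℕ) : 0 < Dd k := by
  induction k with
  | zero => norm_num [Dd]
  | succ k ih => simp only [Dd]; positivity

lemma main_ineq (m : ℕ) (hm : 4 ≤ m) : 2 * Aa m < Dd (2 * m) ^ 2 := by
  induction m, hm using Nat.le_induction with
  | base =>
    show 2 * Aa 4 < Dd 8 ^ 2
    norm_num [Aa, Dd]
  | succ m hm ih =>
    have hDd2 : Dd (2 * (m + 1)) = (4 * m + 3) * ((4 * m + 1) * Dd (2 * m)) := by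
      have e : 2 * (m + 1) = (2 * m + 1) + 1 := by ring
      rw [e]
      show (2 * (2 * m + 1) + 1) * Dd (2 * m + 1) = _
      have : Dd (2 * m + 1) = (2 * (2 * m) + 1) * Dd (2 * m) := rfl
      rw [this]
      ring
    have hstep : 2 * Aa (m + 1) =
        ((4 * m + 3) * ((4 * m + 2) * ((4 * m + 1) * (4 * m + 1)))) * (2 * Aa m) := by
      show 2 * ((4 * m + 3) * ((4 * m + 2) * ((4 * m + 1) * ((4 * m + 1) * Aa m)))) = _
      ring
    rw [hstep, hDd2]
    have hc : 0 < (4 * m + 3) * ((4 * m + 2) * ((4 * m + 1) * (4 * m + 1))) := by positivity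
    calc ((4 * m + 3) * ((4 * m + 2) * ((4 * m + 1) * (4 * m + 1)))) * (2 * Aa m)
        < ((4 * m + 3) * ((4 * m + 2) * ((4 * m + 1) * (4 * m + 1)))) * (Dd (2 * m) ^ 2) :=
          (Nat.mul_lt_mul_left hc).mpr ih
      _ ≤ ((4 * m + 3) * ((4 * m + 1) * Dd (2 * m))) ^ 2 := by
          have h23 : 4 * m + 2 ≤ 4 * m + 3 := by omega
          calc ((4 * m + 3) * ((4 * m + 2) * ((4 * m + 1) * (4 * m + 1)))) * (Dd (2 * m) ^ 2)
              ≤ ((4 * m + 3) * ((4 * m + 3) * ((4 * m + 1) * (4 * m + 1)))) * (Dd (2 * m) ^ 2) := by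
                refine Nat.mul_le_mul_right _ ?_
                exact Nat.mul_le_mul_left _ (Nat.mul_le_mul_right _ h23)
            _ = ((4 * m + 3) * ((4 * m + 1) * Dd (2 * m))) ^ 2 := by ring

end Stmt14

/-- for `m ≥ 4`, `2·|Cyc_4(4m)| < |Reg_2(4m)|`. -/
theorem stmt14 (m : ℕ) (hm : 4 ≤ m) :
    2 * Nat.card {σ : Equiv.Perm (Fin (4 * m)) //
        ∀ x, 4 ∣ Function.minimalPeriod ⇑σ x} <
      Nat.card {σ : Equiv.Perm (Fin (4 * m)) //
        ∀ x, Odd (Function.minimalPeriod ⇑σ x)} := by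
  have h1 : Nat.card {σ : Equiv.Perm (Fin (4 * m)) //
      ∀ x, 4 ∣ Function.minimalPeriod ⇑σ x} = Stmt14.cnt (fun k => 4 ∣ k) (4 * m) := rfl
  have h2 : Nat.card {σ : Equiv.Perm (Fin (4 * m)) //
      ∀ x, Odd (Function.minimalPeriod ⇑σ x)} = Stmt14.cnt Odd (4 * m) := rfl
  rw [h1, h2, Stmt14.cnt4_closed]
  have e : 4 * m = 2 * (2 * m) := by ring
  rw [e, (Stmt14.cnt_odd_closed (2 * m)).1]
  exact Stmt14.main_ineq m hm
end

section
/- Let q ≥ 2 and r = q^l with l ≥ 1. For any m ≥ 1, |Cyc_{qr}(mqr)| ≥ (mq)^{r-1} · |Cyc_{q,r}(mqr)|. -/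
/-- Membership in `Cyc_{q,r}(n)`: every cycle length is a multiple of `q` and
each cycle length occurs a multiple of `r` times. -/
def CycQR (q r : ℕ) {α : Type*} [Fintype α] [DecidableEq α] (σ : Equiv.Perm α) : Prop :=
  (∀ x, q ∣ Function.minimalPeriod ⇑σ x) ∧
    ∀ i : ℕ, r ∣ Multiset.count i σ.cycleType

/-!
Let `τ ∈ Cyc_{q,r}(n)` with `n = mqr`. Its cycle type is `r • s` for a multiset `s` of multiples
of `q`, so `τ` is conjugate to the permutation of `Σ i, ZMod ℓᵢ × ZMod r` (`ℓᵢ` running over `s`)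
that adds `1` to the first coordinate. On one block `ZMod ℓ × ZMod r`, every `u : ZMod r → ZMod ℓ`
with `∑ u = 1` gives an `r`-th root `(a, b) ↦ (a + u b, b + 1)` whose cycles have lengths
divisible by `ℓ r`; there are `ℓ ^ (r - 1)` such `u`. Hence `τ` has at least
`∏ ℓᵢ ^ (r - 1) ≥ (∑ ℓᵢ) ^ (r - 1) = (mq) ^ (r - 1)` roots in `Cyc_{qr}(n)`, and roots of
different `τ` are different since `σ ^ r` recovers `τ`.
-/

open Equiv Finset Function

theorem Function.minimalPeriod_eq_of_forall_isPeriodicPt_iff {α : Type*} {f : α → α} {x : α}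
    {n : ℕ} (h : ∀ k, IsPeriodicPt f k x ↔ n ∣ k) : minimalPeriod f x = n :=
  Nat.dvd_antisymm ((h n).2 dvd_rfl).minimalPeriod_dvd ((h _).1 (isPeriodicPt_minimalPeriod f x))

namespace Equiv.Perm

variable {α β : Type*}

theorem isPeriodicPt_iff_pow_apply (σ : Perm α) (k : ℕ) (x : α) :
    IsPeriodicPt σ k x ↔ (σ ^ k) x = x := by
  rw [IsPeriodicPt, IsFixedPt, iterate_eq_pow]

theorem permCongr_pow (e : α ≃ β) (σ : Perm α) (k : ℕ) :
    e.permCongr σ ^ k = e.permCongr (σ ^ k) :=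
  (map_pow e.permCongrHom σ k).symm

theorem sigmaCongrRight_pow {ι : Type*} {β : ι → Type*} (F : ∀ i, Perm (β i)) (k : ℕ) :
    sigmaCongrRight F ^ k = sigmaCongrRight (F ^ k) :=
  (map_pow (sigmaCongrRightHom β) F k).symm

theorem minimalPeriod_permCongr_apply (e : α ≃ β) (σ : Perm α) (y : β) :
    minimalPeriod (e.permCongr σ) y = minimalPeriod σ (e.symm y) := by
  refine minimalPeriod_eq_minimalPeriod_iff.2 fun k => ?_
  rw [isPeriodicPt_iff_pow_apply, isPeriodicPt_iff_pow_apply, permCongr_pow, permCongr_apply,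
    ← e.eq_symm_apply]

theorem minimalPeriod_sigmaCongrRight_apply {ι : Type*} {β : ι → Type*} (F : ∀ i, Perm (β i))
    (i : ι) (y : β i) : minimalPeriod (sigmaCongrRight F) ⟨i, y⟩ = minimalPeriod (F i) y := by
  refine minimalPeriod_eq_minimalPeriod_iff.2 fun k => ?_
  rw [isPeriodicPt_iff_pow_apply, isPeriodicPt_iff_pow_apply, sigmaCongrRight_pow,
    sigmaCongrRight_apply, Sigma.mk.inj_iff, heq_iff_eq]
  simp

variable [Fintype α] [DecidableEq α] [Fintype β] [DecidableEq β]

theorem minimalPeriod_eq_card_support_cycleOf (σ : Perm α) {x : α} (hx : σ x ≠ x) :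
    minimalPeriod σ x = #(σ.cycleOf x).support := by
  have hc : (σ.cycleOf x).IsCycle := isCycle_cycleOf σ hx
  rw [← hc.orderOf]
  refine minimalPeriod_eq_of_forall_isPeriodicPt_iff fun k => ?_
  rw [isPeriodicPt_iff_pow_apply, orderOf_dvd_iff_pow_eq_one,
    hc.pow_eq_one_iff' (by rwa [cycleOf_apply_self]), cycleOf_pow_apply_self]

theorem card_filter_minimalPeriod_eq (σ : Perm α) {k : ℕ} (hk : 2 ≤ k) :
    #{x | minimalPeriod σ x = k} = k * σ.cycleType.count k := by
  set C := σ.cycleFactorsFinset.filter fun c => #c.support = k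
  have hunion : ({x | minimalPeriod σ x = k} : Finset α) = C.biUnion support := by
    ext x
    simp only [mem_filter, mem_univ, true_and, mem_biUnion, C]
    constructor
    · intro hx
      have hσx : σ x ≠ x := fun h => by
        rw [minimalPeriod_eq_one_iff_isFixedPt.2 h] at hx; omega
      refine ⟨σ.cycleOf x, ⟨cycleOf_mem_cycleFactorsFinset_iff.2 (mem_support.2 hσx), ?_⟩, ?_⟩
      · rw [← minimalPeriod_eq_card_support_cycleOf σ hσx, hx]
      · exact mem_support_cycleOf_iff.2 ⟨SameCycle.refl _ _, mem_support.2 hσx⟩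
    · rintro ⟨c, ⟨hc, rfl⟩, hxc⟩
      obtain rfl := cycle_is_cycleOf hxc hc
      rw [minimalPeriod_eq_card_support_cycleOf σ (mem_support.1 (mem_support_cycleOf_iff.1 hxc).2)]
  have hcount : σ.cycleType.count k = #C := by
    rw [cycleType_def, Multiset.count_map, card_def, filter_val]
    simp only [comp_apply, eq_comm]
  rw [hunion, card_biUnion, sum_congr rfl fun c hc => (mem_filter.1 hc).2, sum_const, smul_eq_mul,
    hcount, mul_comm]
  exact fun c hc d hd hcd => (σ.cycleFactorsFinset_pairwise_disjoint
    (mem_filter.1 hc).1 (mem_filter.1 hd).1 hcd).disjoint_support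

theorem cycleType_permCongr (e : α ≃ β) (σ : Perm α) : (e.permCongr σ).cycleType = σ.cycleType := by
  ext k
  by_cases hk : 2 ≤ k
  · refine Nat.eq_of_mul_eq_mul_left (by omega : 0 < k) ?_
    rw [← card_filter_minimalPeriod_eq _ hk, ← card_filter_minimalPeriod_eq _ hk]
    exact card_equiv e.symm fun y => by simp [minimalPeriod_permCongr_apply]
  · rw [Multiset.count_eq_zero.2 fun h => hk (two_le_of_mem_cycleType h),
      Multiset.count_eq_zero.2 fun h => hk (two_le_of_mem_cycleType h)]

theorem exists_permCongr_eq_of_cycleType_eq {π : Perm β} {σ : Perm α}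
    (hcard : Fintype.card β = Fintype.card α) (h : π.cycleType = σ.cycleType) :
    ∃ e : β ≃ α, e.permCongr π = σ := by
  let e₀ := Fintype.equivOfCardEq hcard
  obtain ⟨g, rfl⟩ :=
    isConj_iff.1 (isConj_iff_cycleType_eq.2 ((cycleType_permCongr e₀ π).trans h))
  exact ⟨e₀.trans g, by ext; simp⟩

theorem exists_minimalPeriod_eq_of_mem_cycleType {σ : Perm α} {k : ℕ} (h : k ∈ σ.cycleType) :
    ∃ x, minimalPeriod σ x = k := by
  have hk := two_le_of_mem_cycleType h
  have hpos : 0 < #{x | minimalPeriod σ x = k} := by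
    rw [card_filter_minimalPeriod_eq σ hk]
    exact Nat.mul_pos (by omega) (Multiset.count_pos.2 h)
  obtain ⟨x, hx⟩ := card_pos.1 hpos
  exact ⟨x, (mem_filter.1 hx).2⟩

theorem sum_cycleType_eq_card {σ : Perm α} (hσ : ∀ x, σ x ≠ x) :
    σ.cycleType.sum = Fintype.card α := by
  rw [sum_cycleType, (eq_univ_iff_forall.2 fun x => mem_support.2 (hσ x)), card_univ]

theorem card_roots_permCongr (e : β ≃ α) (π : Perm β) (d r : ℕ) :
    #{ρ : Perm β | (∀ y, d ∣ minimalPeriod ρ y) ∧ ρ ^ r = π} =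
      #{σ : Perm α | (∀ x, d ∣ minimalPeriod σ x) ∧ σ ^ r = e.permCongr π} :=
  card_equiv e.permCongr fun ρ => by
    simp only [mem_filter, mem_univ, true_and, minimalPeriod_permCongr_apply, permCongr_pow,
      EmbeddingLike.apply_eq_iff_eq,
      e.symm.forall_congr_right (q := fun y => d ∣ minimalPeriod ρ y)]

end Equiv.Perm

theorem Finset.sum_le_prod_of_two_le {ι : Type*} (s : Finset ι) {f : ι → ℕ}
    (hf : ∀ i ∈ s, 2 ≤ f i) : ∑ i ∈ s, f i ≤ ∏ i ∈ s, f i := by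
  induction s using Finset.cons_induction with
  | empty => simp
  | cons a s ha ih =>
    rw [sum_cons, prod_cons]
    have hfa := hf a (mem_cons_self a s)
    have ih := ih fun i hi => hf i (mem_cons_of_mem hi)
    rcases s.eq_empty_or_nonempty with rfl | ⟨b, hb⟩
    · simp
    · have hprod : 2 ≤ ∏ i ∈ s, f i :=
        (hf b (mem_cons_of_mem hb)).trans ((single_le_sum (by simp) hb).trans ih)
      calc f a + ∑ i ∈ s, f i ≤ f a + ∏ i ∈ s, f i := by omega
        _ ≤ f a * ∏ i ∈ s, f i := Nat.add_le_mul hfa hprod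

theorem ZMod.sum_range_add_natCast {r : ℕ} [NeZero r] {M : Type*} [AddCommMonoid M]
    (f : ZMod r → M) (a : ZMod r) : ∑ s ∈ range r, f (a + s) = ∑ z, f z := by
  calc ∑ s ∈ range r, f (a + s) = ∑ z, f (a + z) :=
        sum_nbij' (fun s => (s : ZMod r)) ZMod.val (by simp) (by simp [ZMod.val_lt])
          (fun s hs => ZMod.val_cast_of_lt (mem_range.1 hs)) (by simp) (by simp)
    _ = ∑ z, f z := Equiv.sum_comp (Equiv.addLeft a) f

section CompleteWithSum

variable {ι M : Type*} [Fintype ι] [DecidableEq ι] [AddCommGroup M]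

def completeWithSum (a : ι) (c : M) (v : {i // i ≠ a} → M) (i : ι) : M :=
  if h : i = a then c - ∑ j, v j else v ⟨i, h⟩

theorem sum_completeWithSum (a : ι) (c : M) (v : {i // i ≠ a} → M) :
    ∑ i, completeWithSum a c v i = c := by
  have hv : ∑ j : {i // i ≠ a}, completeWithSum a c v j = ∑ j, v j :=
    sum_congr rfl fun j _ => dif_neg j.2
  rw [Fintype.sum_eq_add_sum_compl a, sum_subtype (p := (· ≠ a)) (F := inferInstance) _ (by simp),
    hv, completeWithSum, dif_pos rfl, sub_add_cancel]

theorem completeWithSum_injective (a : ι) (c : M) : Injective (completeWithSum a c) :=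
  fun v w h => funext fun j => by simpa [completeWithSum, j.2] using congr_fun h j

end CompleteWithSum

section ParallelCycles

open Equiv.Perm

variable {ℓ r : ℕ}

def parallelCycles (ℓ r : ℕ) : Perm (ZMod ℓ × ZMod r) where
  toFun p := (p.1 + 1, p.2)
  invFun p := (p.1 - 1, p.2)
  left_inv p := by simp
  right_inv p := by simp

def interleave (u : ZMod r → ZMod ℓ) : Perm (ZMod ℓ × ZMod r) where
  toFun p := (p.1 + u p.2, p.2 + 1)
  invFun p := (p.1 - u (p.2 - 1), p.2 - 1)
  left_inv p := by simp
  right_inv p := by simp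

theorem parallelCycles_apply (p : ZMod ℓ × ZMod r) : parallelCycles ℓ r p = (p.1 + 1, p.2) := rfl

theorem interleave_apply (u : ZMod r → ZMod ℓ) (p : ZMod ℓ × ZMod r) :
    interleave u p = (p.1 + u p.2, p.2 + 1) := rfl

theorem parallelCycles_pow_apply (k : ℕ) (p : ZMod ℓ × ZMod r) :
    (parallelCycles ℓ r ^ k) p = (p.1 + k, p.2) := by
  induction k with
  | zero => simp
  | succ k ih =>
    rw [pow_succ', mul_apply, ih, parallelCycles_apply]
    simp [add_assoc]

theorem interleave_pow_apply (u : ZMod r → ZMod ℓ) (k : ℕ) (p : ZMod ℓ × ZMod r) :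
    (interleave u ^ k) p = (p.1 + ∑ s ∈ range k, u (p.2 + s), p.2 + k) := by
  induction k with
  | zero => simp
  | succ k ih =>
    rw [pow_succ', mul_apply, ih, interleave_apply]
    simp [sum_range_succ, add_assoc]

theorem interleave_pow_eq_parallelCycles [NeZero r] {u : ZMod r → ZMod ℓ} (hu : ∑ z, u z = 1) :
    interleave u ^ r = parallelCycles ℓ r := by
  ext p
  · simp [interleave_pow_apply, ZMod.sum_range_add_natCast, hu, parallelCycles_apply]
  · simp [interleave_pow_apply, parallelCycles_apply]

theorem interleave_injective : Injective (interleave : (ZMod r → ZMod ℓ) → Perm _) :=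
  fun u v h => funext fun z => by simpa [interleave_apply] using congr_arg (fun σ => (σ (0, z)).1) h

theorem minimalPeriod_parallelCycles (p : ZMod ℓ × ZMod r) :
    minimalPeriod (parallelCycles ℓ r) p = ℓ :=
  minimalPeriod_eq_of_forall_isPeriodicPt_iff fun k => by
    simp [isPeriodicPt_iff_pow_apply, parallelCycles_pow_apply, Prod.ext_iff,
      ZMod.natCast_eq_zero_iff]

theorem dvd_minimalPeriod_interleave [NeZero r] {u : ZMod r → ZMod ℓ} (hu : ∑ z, u z = 1)
    (p : ZMod ℓ × ZMod r) : ℓ * r ∣ minimalPeriod (interleave u) p := by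
  have hP := (isPeriodicPt_iff_pow_apply _ _ _).1 (isPeriodicPt_minimalPeriod (interleave u) p)
  obtain ⟨k, hk⟩ : r ∣ minimalPeriod (interleave u) p := by
    have := congr_arg Prod.snd hP
    rw [interleave_pow_apply] at this
    simpa [ZMod.natCast_eq_zero_iff] using this
  have hℓk : ℓ ∣ k := by
    rw [← minimalPeriod_parallelCycles p, ← isPeriodicPt_iff_minimalPeriod_dvd,
      isPeriodicPt_iff_pow_apply, ← interleave_pow_eq_parallelCycles hu, ← pow_mul, ← hk, hP]
  rw [hk, mul_comm]
  exact mul_dvd_mul_left r hℓk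

end ParallelCycles

section CycleModel

open Equiv.Perm

def cycleModel {ι : Type*} (ℓ : ι → ℕ) (r : ℕ) : Perm (Σ i, ZMod (ℓ i) × ZMod r) :=
  Perm.sigmaCongrRight fun i => parallelCycles (ℓ i) r

variable {r : ℕ} {ι : Type*} [Fintype ι] [DecidableEq ι] {ℓ : ι → ℕ} [∀ i, NeZero (ℓ i)]

theorem cycleType_cycleModel [NeZero r] (hℓ : ∀ i, 2 ≤ ℓ i) :
    (cycleModel ℓ r).cycleType = r • univ.val.map ℓ := by
  ext k
  by_cases hk : 2 ≤ k
  · refine Nat.eq_of_mul_eq_mul_left (by omega : 0 < k) ?_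
    have hfilter : ({z | minimalPeriod (cycleModel ℓ r) z = k} : Finset (Σ i, ZMod (ℓ i) × ZMod r))
        = ({i | ℓ i = k} : Finset ι).sigma fun _ => univ := by
      ext ⟨i, y⟩
      simp only [mem_filter, mem_univ, true_and, mem_sigma, and_true]
      rw [cycleModel, minimalPeriod_sigmaCongrRight_apply, minimalPeriod_parallelCycles]
    have hblock : ∀ i ∈ ({i | ℓ i = k} : Finset ι),
        #(univ : Finset (ZMod (ℓ i) × ZMod r)) = k * r := fun i hi => by
      rw [card_univ, Fintype.card_prod, ZMod.card, ZMod.card, (mem_filter.1 hi).2]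
    rw [← card_filter_minimalPeriod_eq _ hk, hfilter, card_sigma, sum_congr rfl hblock, sum_const,
      smul_eq_mul, Multiset.count_nsmul, Multiset.count_map, card_def, filter_val]
    simp only [eq_comm]
    ring
  · rw [Multiset.count_eq_zero.2 fun h => hk (two_le_of_mem_cycleType h),
      Multiset.count_eq_zero.2 fun h => hk ?_]
    obtain ⟨i, -, rfl⟩ := Multiset.mem_map.1 (Multiset.mem_of_mem_nsmul h)
    exact hℓ i

theorem card_le_card_roots_cycleModel [NeZero r] {q : ℕ} (hq : ∀ i, q ∣ ℓ i) :
    ∏ i, ℓ i ^ (r - 1) ≤ #{ρ : Perm (Σ i, ZMod (ℓ i) × ZMod r) |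
      (∀ z, q * r ∣ minimalPeriod ρ z) ∧ ρ ^ r = cycleModel ℓ r} := by
  let root : (∀ i, {z : ZMod r // z ≠ 0} → ZMod (ℓ i)) → Perm (Σ i, ZMod (ℓ i) × ZMod r) :=
    Perm.sigmaCongrRightHom _ ∘ Pi.map fun i v => interleave (completeWithSum 0 1 v)
  have hroot : Injective root := Perm.sigmaCongrRightHom_injective.comp
    (Injective.piMap fun _ => interleave_injective.comp (completeWithSum_injective 0 1))
  calc ∏ i, ℓ i ^ (r - 1) = #(univ : Finset (∀ i, {z : ZMod r // z ≠ 0} → ZMod (ℓ i))) := by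
        simp [Fintype.card_pi, Fintype.card_subtype_compl]
    _ ≤ _ := by
      refine card_le_card_of_injOn root (fun w _ => ?_) hroot.injOn
      simp only [coe_filter, mem_univ, true_and, Set.mem_ofPred_eq, root, comp_apply,
        Perm.sigmaCongrRightHom_apply]
      refine ⟨fun ⟨i, y⟩ => ?_, ?_⟩
      · rw [Perm.minimalPeriod_sigmaCongrRight_apply]
        exact (mul_dvd_mul_right (hq i) r).trans
          (dvd_minimalPeriod_interleave (sum_completeWithSum _ _ _) y)
      · rw [Perm.sigmaCongrRight_pow, cycleModel]
        congr 1
        funext i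
        exact interleave_pow_eq_parallelCycles (sum_completeWithSum _ _ _)

end CycleModel

section Roots

open Equiv.Perm

theorem pow_card_div_le_card_roots {α : Type*} [Fintype α] [DecidableEq α] {q r : ℕ} [NeZero r]
    (hq : 2 ≤ q) {τ : Perm α} (hτ : CycQR q r τ) :
    (Fintype.card α / r) ^ (r - 1) ≤
      #{σ : Perm α | (∀ x, q * r ∣ minimalPeriod σ x) ∧ σ ^ r = τ} := by
  classical
  obtain ⟨hqτ, hrτ⟩ := hτ
  obtain ⟨s, hs⟩ := Multiset.exists_smul_of_dvd_count τ.cycleType fun k _ => hrτ k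
  have hfix : ∀ x, τ x ≠ x := fun x hx => by
    have := Nat.le_of_dvd one_pos (minimalPeriod_eq_one_iff_isFixedPt.2 hx ▸ hqτ x)
    omega
  -- one block of `cycleModel` for each element of `s`, counted with multiplicity
  let ℓ : s → ℕ := fun k => k
  have hℓ : ∀ k, 2 ≤ ℓ k ∧ q ∣ ℓ k := fun k => by
    have hk : ℓ k ∈ τ.cycleType := hs ▸ Multiset.mem_nsmul.2 ⟨NeZero.ne r, Multiset.coe_mem⟩
    obtain ⟨x, hx⟩ := exists_minimalPeriod_eq_of_mem_cycleType hk
    exact ⟨two_le_of_mem_cycleType hk, hx ▸ hqτ x⟩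
  have : ∀ k, NeZero (ℓ k) := fun k => ⟨(two_pos.trans_le (hℓ k).1).ne'⟩
  have hsum : ∑ k, ℓ k = s.sum := by rw [sum_eq_multiset_sum, Multiset.map_univ_coe]
  have hcard_α : Fintype.card α = r * s.sum := by
    rw [← sum_cycleType_eq_card hfix, hs, Multiset.sum_nsmul, smul_eq_mul]
  have hcard : Fintype.card (Σ k, ZMod (ℓ k) × ZMod r) = Fintype.card α := by
    simp only [Fintype.card_sigma, Fintype.card_prod, ZMod.card]
    rw [← sum_mul, hsum, hcard_α, mul_comm]
  obtain ⟨e, he⟩ := exists_permCongr_eq_of_cycleType_eq (π := cycleModel ℓ r) (σ := τ) hcard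
    (by rw [cycleType_cycleModel fun k => (hℓ k).1, Multiset.map_univ_coe s, hs])
  calc (Fintype.card α / r) ^ (r - 1) = (∑ k, ℓ k) ^ (r - 1) := by
        rw [hcard_α, hsum, Nat.mul_div_cancel_left _ (Nat.pos_of_neZero r)]
    _ ≤ (∏ k, ℓ k) ^ (r - 1) :=
        Nat.pow_le_pow_left (sum_le_prod_of_two_le (f := ℓ) _ fun k _ => (hℓ k).1) _
    _ = ∏ k, ℓ k ^ (r - 1) := (prod_pow _ _ _).symm
    _ ≤ _ := card_le_card_roots_cycleModel fun k => (hℓ k).2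
    _ = _ := by rw [card_roots_permCongr e, he]

theorem pow_mul_card_cycQR_le_card {α : Type*} [Fintype α] [DecidableEq α] {q r : ℕ} [NeZero r]
    (hq : 2 ≤ q) :
    (Fintype.card α / r) ^ (r - 1) * Nat.card {τ : Perm α // CycQR q r τ} ≤
      Nat.card {σ : Perm α // ∀ x, q * r ∣ minimalPeriod σ x} := by
  classical
  rw [Nat.card_eq_fintype_card, Nat.card_eq_fintype_card, Fintype.card_subtype,
    Fintype.card_subtype]
  calc (Fintype.card α / r) ^ (r - 1) * #{τ : Perm α | CycQR q r τ}
      ≤ #{σ : Perm α | (∀ x, q * r ∣ minimalPeriod σ x) ∧ CycQR q r (σ ^ r)} := by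
        refine mul_card_image_le_card_of_maps_to (f := (· ^ r)) (fun σ hσ => ?_) _ fun τ hτ => ?_
        · simp only [mem_filter, mem_univ, true_and] at hσ ⊢
          exact hσ.2
        · rw [mem_filter] at hτ
          refine (pow_card_div_le_card_roots hq hτ.2).trans (card_le_card fun σ hσ => ?_)
          simp only [mem_filter, mem_univ, true_and] at hσ ⊢
          exact ⟨⟨hσ.1, hσ.2 ▸ hτ.2⟩, hσ.2⟩
    _ ≤ #{σ : Perm α | ∀ x, q * r ∣ minimalPeriod σ x} :=
        card_le_card fun σ hσ => by
          simp only [mem_filter, mem_univ, true_and] at hσ ⊢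
          exact hσ.1

end Roots

theorem stmt15_general (q l r m : ℕ) (hq : 2 ≤ q) (hr : r = q ^ l) :
    Nat.card {σ : Equiv.Perm (Fin (m * q * r)) //
        ∀ x, (q * r) ∣ Function.minimalPeriod ⇑σ x} ≥
      (m * q) ^ (r - 1) *
        Nat.card {σ : Equiv.Perm (Fin (m * q * r)) // CycQR q r σ} := by
  have : NeZero r := ⟨hr ▸ pow_ne_zero l (by omega)⟩
  have h := pow_mul_card_cycQR_le_card (α := Fin (m * q * r)) (r := r) hq
  rwa [Fintype.card_fin, Nat.mul_div_cancel _ (Nat.pos_of_neZero r)] at h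

/-- for `q ≥ 2`, `r = q^l`, `l ≥ 1`, `m ≥ 1`:
`|Cyc_{qr}(mqr)| ≥ (mq)^{r-1} · |Cyc_{q,r}(mqr)|`. -/
theorem stmt15 (q l r m : ℕ) (hq : 2 ≤ q) (hl : 1 ≤ l) (hr : r = q ^ l) (hm : 1 ≤ m) :
    Nat.card {σ : Equiv.Perm (Fin (m * q * r)) //
        ∀ x, (q * r) ∣ Function.minimalPeriod ⇑σ x} ≥
      (m * q) ^ (r - 1) *
        Nat.card {σ : Equiv.Perm (Fin (m * q * r)) // CycQR q r σ} :=
  stmt15_general q l r m hq hr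
end
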